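/- arXiv:1810.12805 — 4 statements merged into one kernel-verified Lean document; each statement's English description precedes it below -/
import Mathlib

section
/- For any fixed input a ∈ ℝ^{n₀}, the map W ↦ y(a,W) from weight space ℝ^m to ℝ is infinitely differentiable (C^∞) at every point outside a set of Lebesgue measure zero in ℝ^m. -/
open scoped BigOperators

/-- Index set for all weights of the network: a weight `w^i_{j,k}` connects
neuron `j` in layer `i` to neuron `k` in layer `i+1`. -/
abbrev WeightIdx (n : ℕ → ℕ) (H : ℕ) : Type :=
  (i : Fin (H + 1)) × (Fin (n i) × Fin (n (i + 1)))

/-- Weight space `ℝ^m`, with the Euclidean norm. -/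
abbrev WeightSpace (n : ℕ → ℕ) (H : ℕ) : Type :=
  EuclideanSpace ℝ (WeightIdx n H)

/-- Activations of the feed-forward ReLU network:
`x_0 = a`, `x_{k+1} = σ(W_k^T x_k)`. -/
def netAct (n : ℕ → ℕ) (H : ℕ) (W : WeightSpace n H)
    (a : EuclideanSpace ℝ (Fin (n 0))) : (k : ℕ) → k ≤ H + 1 → (Fin (n k) → ℝ)
  | 0, _ => a
  | k + 1, h => fun j =>
      max (∑ l : Fin (n k), W ⟨⟨k, h⟩, (l, j)⟩ * netAct n H W a k (Nat.le_of_succ_le h) l) 0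

/-- Scalar output of the ReLU network, `y(a, W)`. -/
def netOut (n : ℕ → ℕ) (H : ℕ) (hout : n (H + 1) = 1) (W : WeightSpace n H)
    (a : EuclideanSpace ℝ (Fin (n 0))) : ℝ :=
  netAct n H W a (H + 1) le_rfl ⟨0, by omega⟩

/-- Quadratic training loss `ℓ(W)`. -/
noncomputable def loss (n : ℕ → ℕ) (H N : ℕ) (hout : n (H + 1) = 1)
    (a : Fin N → EuclideanSpace ℝ (Fin (n 0)))
    (f : EuclideanSpace ℝ (Fin (n 0)) → ℝ) (W : WeightSpace n H) : ℝ :=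
  (1 / (2 * (N : ℝ))) * ∑ i, (f (a i) - netOut n H hout W (a i)) ^ 2

/-- Regularized loss `ℓ_λ(W) = ℓ(W) + (λ/2)‖W‖²`. -/
noncomputable def lossReg (n : ℕ → ℕ) (H N : ℕ) (hout : n (H + 1) = 1)
    (a : Fin N → EuclideanSpace ℝ (Fin (n 0)))
    (f : EuclideanSpace ℝ (Fin (n 0)) → ℝ) (lam : ℝ) (W : WeightSpace n H) : ℝ :=
  loss n H N hout a f W + lam / 2 * ‖W‖ ^ 2

/-- The `i`-th weight matrix `W_i` of a weight vector `W`. -/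
def block (n : ℕ → ℕ) (H : ℕ) (W : WeightSpace n H) (i : Fin (H + 1)) :
    Matrix (Fin (n i)) (Fin (n (i + 1))) ℝ :=
  Matrix.of fun j k => W ⟨i, (j, k)⟩

/-- Operator norm (induced by the Euclidean norms) of a matrix. -/
noncomputable def opNorm2 {p q : ℕ} (M : Matrix (Fin p) (Fin q) ℝ) : ℝ :=
  ‖LinearMap.toContinuousLinearMap (Matrix.toEuclideanLin M)‖

/-- `‖W‖_* = max_i ‖W_i‖₂`. -/
noncomputable def starNorm (n : ℕ → ℕ) (H : ℕ) (W : WeightSpace n H) : ℝ :=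
  ⨆ i : Fin (H + 1), opNorm2 (block n H W i)

/-- The set `U(λ,θ)`. -/
noncomputable def Uset (n : ℕ → ℕ) (H N : ℕ) (hout : n (H + 1) = 1)
    (a : Fin N → EuclideanSpace ℝ (Fin (n 0)))
    (f : EuclideanSpace ℝ (Fin (n 0)) → ℝ) (lam θ r : ℝ) : Set (WeightSpace n H) :=
  {W | Real.sqrt (loss n H N hout a f W) * starNorm n H W ^ (H - 1) <
    (lam - θ) / (Real.sqrt 2 * ((H : ℝ) * ((H : ℝ) + 1)) * r)}

namespace NetAux

variable (n : ℕ → ℕ) (H : ℕ) (a : EuclideanSpace ℝ (Fin (n 0)))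

abbrev Pat : Type := ∀ i : Fin (H + 1), Fin (n (i + 1)) → Bool

noncomputable def netPre (W : WeightSpace n H) (k : ℕ) (h : k + 1 ≤ H + 1)
    (j : Fin (n (k + 1))) : ℝ :=
  ∑ l : Fin (n k), W ⟨⟨k, h⟩, (l, j)⟩ * netAct n H W a k (Nat.le_of_succ_le h) l

lemma netAct_succ (W : WeightSpace n H) (k : ℕ) (h : k + 1 ≤ H + 1) (j : Fin (n (k + 1))) :
    netAct n H W a (k + 1) h j = max (netPre n H a W k h j) 0 := rfl

noncomputable def hatAct (s : Pat n H) (W : WeightSpace n H) :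
    (k : ℕ) → k ≤ H + 1 → Fin (n k) → ℝ
  | 0, _ => a
  | k + 1, h => fun j =>
      if s ⟨k, h⟩ j then
        ∑ l : Fin (n k), W ⟨⟨k, h⟩, (l, j)⟩ * hatAct s W k (Nat.le_of_succ_le h) l
      else 0

noncomputable def hatPre (s : Pat n H) (W : WeightSpace n H) (k : ℕ) (h : k + 1 ≤ H + 1)
    (j : Fin (n (k + 1))) : ℝ :=
  ∑ l : Fin (n k), W ⟨⟨k, h⟩, (l, j)⟩ * hatAct n H a s W k (Nat.le_of_succ_le h) l

lemma hatAct_succ (s : Pat n H) (W : WeightSpace n H) (k : ℕ) (h : k + 1 ≤ H + 1)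
    (j : Fin (n (k + 1))) :
    hatAct n H a s W (k + 1) h j = if s ⟨k, h⟩ j then hatPre n H a s W k h j else 0 := rfl
variable (n : ℕ → ℕ) (H : ℕ) (a : EuclideanSpace ℝ (Fin (n 0)))

lemma hatAct_congr (s : Pat n H) {W W' : WeightSpace n H} :
    ∀ (k : ℕ) (h : k ≤ H + 1),
      (∀ idx : WeightIdx n H, (idx.1 : ℕ) < k → W idx = W' idx) →
      hatAct n H a s W k h = hatAct n H a s W' k h := by
  intro k
  induction k with
  | zero => intro h _; rfl
  | succ k ih =>
    intro h hWW
    funext j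
    rw [hatAct_succ, hatAct_succ]
    by_cases hs : s ⟨k, h⟩ j
    · rw [if_pos hs, if_pos hs]
      unfold hatPre
      rw [ih (Nat.le_of_succ_le h) (fun idx hi => hWW idx (Nat.lt_succ_of_lt hi))]
      exact Finset.sum_congr rfl fun l _ => by
        rw [hWW ⟨⟨k, h⟩, (l, j)⟩ (Nat.lt_succ_self k)]
    · rw [if_neg hs, if_neg hs]

lemma contDiff_hatAct (s : Pat n H) :
    ∀ (k : ℕ) (h : k ≤ H + 1) (j : Fin (n k)),
      ContDiff ℝ (⊤ : ℕ∞) (fun W : WeightSpace n H => hatAct n H a s W k h j) := by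
  intro k
  induction k with
  | zero => intro h j; exact contDiff_const
  | succ k ih =>
    intro h j
    have he : (fun W : WeightSpace n H => hatAct n H a s W (k + 1) h j) =
        fun W : WeightSpace n H =>
          if s ⟨k, h⟩ j then
            ∑ l : Fin (n k), W ⟨⟨k, h⟩, (l, j)⟩ * hatAct n H a s W k (Nat.le_of_succ_le h) l
          else 0 := rfl
    rw [he]
    by_cases hs : s ⟨k, h⟩ j
    · simp only [hs, if_true]
      exact ContDiff.sum fun l _ =>
        ((EuclideanSpace.proj (𝕜 := ℝ) (⟨⟨k, h⟩, (l, j)⟩ : WeightIdx n H)).contDiff).mul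
          (ih (Nat.le_of_succ_le h) l)
    · simp only [hs, if_false]; exact contDiff_const

lemma contDiff_hatPre (s : Pat n H) (k : ℕ) (h : k + 1 ≤ H + 1) (j : Fin (n (k + 1))) :
    ContDiff ℝ (⊤ : ℕ∞) (fun W : WeightSpace n H => hatPre n H a s W k h j) :=
  ContDiff.sum fun l _ =>
    ((EuclideanSpace.proj (𝕜 := ℝ) (⟨⟨k, h⟩, (l, j)⟩ : WeightIdx n H)).contDiff).mul
      (contDiff_hatAct n H a s k (Nat.le_of_succ_le h) l)

lemma continuous_netAct :
    ∀ (k : ℕ) (h : k ≤ H + 1) (j : Fin (n k)),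
      Continuous (fun W : WeightSpace n H => netAct n H W a k h j) := by
  intro k
  induction k with
  | zero => intro h j; exact continuous_const
  | succ k ih =>
    intro h j
    have he : (fun W : WeightSpace n H => netAct n H W a (k + 1) h j) =
        fun W : WeightSpace n H =>
          max (∑ l : Fin (n k), W ⟨⟨k, h⟩, (l, j)⟩ * netAct n H W a k (Nat.le_of_succ_le h) l)
            0 := rfl
    rw [he]
    exact (continuous_finset_sum _ fun l _ =>
      ((EuclideanSpace.proj (𝕜 := ℝ) (⟨⟨k, h⟩, (l, j)⟩ : WeightIdx n H)).continuous).mul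
        (ih (Nat.le_of_succ_le h) l)).max continuous_const

lemma continuous_netPre (k : ℕ) (h : k + 1 ≤ H + 1) (j : Fin (n (k + 1))) :
    Continuous (fun W : WeightSpace n H => netPre n H a W k h j) :=
  continuous_finset_sum _ fun l _ =>
    ((EuclideanSpace.proj (𝕜 := ℝ) (⟨⟨k, h⟩, (l, j)⟩ : WeightIdx n H)).continuous).mul
      (continuous_netAct n H a k (Nat.le_of_succ_le h) l)

/-- The sign pattern of `W`. -/
noncomputable def patt (W : WeightSpace n H) : Pat n H :=
  fun i j => decide (0 < netPre n H a W i i.2 j)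

lemma hatAct_patt (W : WeightSpace n H) :
    ∀ (k : ℕ) (h : k ≤ H + 1), hatAct n H a (patt n H a W) W k h = netAct n H W a k h := by
  intro k
  induction k with
  | zero => intro h; rfl
  | succ k ih =>
    intro h
    funext j
    have hpre : hatPre n H a (patt n H a W) W k h j = netPre n H a W k h j := by
      unfold hatPre netPre
      rw [ih (Nat.le_of_succ_le h)]
    rw [hatAct_succ, netAct_succ, hpre]
    have hps : patt n H a W ⟨k, h⟩ j = decide (0 < netPre n H a W k h j) := rfl
    rw [hps]
    by_cases hp : 0 < netPre n H a W k h j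
    · simp only [hp, decide_eq_true_eq, if_true]
      exact (max_eq_left hp.le).symm
    · simp only [hp, decide_eq_false_iff_not, if_false]
      exact (max_eq_right (not_lt.1 hp)).symm


lemma hatPre_patt (W : WeightSpace n H) (k : ℕ) (h : k + 1 ≤ H + 1) (j : Fin (n (k + 1))) :
    hatPre n H a (patt n H a W) W k h j = netPre n H a W k h j := by
  unfold hatPre netPre
  rw [hatAct_patt n H a W k (Nat.le_of_succ_le h)]

lemma act_eq_of_signs (s : Pat n H) (V : WeightSpace n H)
    (hV : ∀ (i : Fin (H + 1)) (j : Fin (n (i + 1))),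
      (s i j = true → 0 < hatPre n H a s V i i.2 j) ∧
      (s i j = false → hatPre n H a s V i i.2 j < 0)) :
    ∀ (k : ℕ) (h : k ≤ H + 1), netAct n H V a k h = hatAct n H a s V k h := by
  intro k
  induction k with
  | zero => intro h; rfl
  | succ k ih =>
    intro h
    funext j
    have hpre : netPre n H a V k h j = hatPre n H a s V k h j := by
      unfold hatPre netPre
      rw [ih (Nat.le_of_succ_le h)]
    rw [netAct_succ, hatAct_succ, hpre]
    rcases Bool.eq_false_or_eq_true (s ⟨k, h⟩ j) with hs | hs
    · rw [hs, if_pos rfl]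
      exact max_eq_left ((hV ⟨k, h⟩ j).1 hs).le
    · rw [hs, if_neg (by simp)]
      exact max_eq_right ((hV ⟨k, h⟩ j).2 hs).le

lemma netAct_zero_from (V : WeightSpace n H) (k : ℕ) (hk : k ≤ H + 1)
    (h0 : ∀ l, netAct n H V a k hk l = 0) :
    ∀ (k' : ℕ) (h' : k' ≤ H + 1), k ≤ k' → ∀ j, netAct n H V a k' h' j = 0 := by
  intro k'
  induction k' with
  | zero =>
    intro h' hkk j
    obtain rfl : k = 0 := Nat.le_zero.mp hkk
    exact h0 j
  | succ k' ih =>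
    intro h' hkk j
    rcases Nat.lt_or_ge k (k' + 1) with hlt | hge
    · have hz : ∀ l, netAct n H V a k' (Nat.le_of_succ_le h') l = 0 :=
        ih (Nat.le_of_succ_le h') (Nat.lt_succ_iff.mp hlt)
      rw [netAct_succ]
      have hp : netPre n H a V k' h' j = 0 := by
        unfold netPre
        exact Finset.sum_eq_zero fun l _ => by rw [hz l, mul_zero]
      rw [hp]
      exact max_self 0
    · obtain rfl : k = k' + 1 := le_antisymm hkk hge
      exact h0 j

open MeasureTheory

noncomputable def badSet : Set (WeightSpace n H) :=
  ⋃ (s : Pat n H) (i : Fin (H + 1)) (j : Fin (n (i + 1))),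
    {W : WeightSpace n H | hatPre n H a s W i i.2 j = 0 ∧
      ∃ l, hatAct n H a s W i (le_of_lt i.2) l ≠ 0}

lemma piece_null (s : Pat n H) (i : Fin (H + 1)) (j : Fin (n (i + 1))) :
    volume {W : WeightSpace n H | hatPre n H a s W i i.2 j = 0 ∧
      ∃ l, hatAct n H a s W i (le_of_lt i.2) l ≠ 0} = 0 := by
  classical
  set ι := WeightIdx n H with hι
  set N : Set (WeightSpace n H) :=
    {W : WeightSpace n H | hatPre n H a s W i i.2 j = 0 ∧
      ∃ l, hatAct n H a s W i (le_of_lt i.2) l ≠ 0} with hN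
  have hNmeas : MeasurableSet N := by
    have hNeq : N = {W : WeightSpace n H | hatPre n H a s W i i.2 j = 0} ∩
        ⋃ l, {W : WeightSpace n H | hatAct n H a s W i (le_of_lt i.2) l ≠ 0} := by
      ext W
      simp [hN, Set.mem_iUnion]
    rw [hNeq]
    refine MeasurableSet.inter ?_ (MeasurableSet.iUnion fun l => ?_)
    · exact (contDiff_hatPre n H a s i i.2 j).continuous.measurable (measurableSet_singleton 0)
    · exact ((contDiff_hatAct n H a s i (le_of_lt i.2) l).continuous.measurable
        (measurableSet_singleton 0)).compl
  let q : ι → Prop := fun idx => ∀ l : Fin (n i), idx ≠ ⟨i, (l, j)⟩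
  let e1 := (MeasurableEquiv.toLp 2 (ι → ℝ)).symm
  let e2 := MeasurableEquiv.piEquivPiSubtypeProd (fun _ : ι => ℝ) q
  have hmp : MeasurePreserving (⇑e2 ∘ ⇑e1) volume volume :=
    (volume_preserving_piEquivPiSubtypeProd (fun _ : ι => ℝ) q).comp
      (EuclideanSpace.volume_preserving_symm_measurableEquiv_toLp ι)
  set B : Set ((∀ idx : {idx // q idx}, ℝ) × (∀ idx : {idx // ¬ q idx}, ℝ)) :=
    (fun z => e1.symm (e2.symm z)) ⁻¹' N with hB
  have hBmeas : MeasurableSet B :=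
    (e1.symm.measurable.comp e2.symm.measurable) hNmeas
  have hpre : (⇑e2 ∘ ⇑e1) ⁻¹' B = N := by
    ext W
    simp [hB, Function.comp, MeasurableEquiv.symm_apply_apply]
  have hvol : volume N = volume B := by
    rw [← hpre]
    exact hmp.measure_preimage hBmeas.nullMeasurableSet
  rw [hvol, Measure.volume_eq_prod, Measure.measure_prod_null hBmeas]
  refine Filter.Eventually.of_forall fun x => ?_
  -- the recombination map
  set V : ((∀ idx : {idx // ¬ q idx}, ℝ)) → WeightSpace n H :=
    fun w => e1.symm (e2.symm (x, w)) with hV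
  have hVcoord : ∀ w idx, V w idx = if h : q idx then x ⟨idx, h⟩ else w ⟨idx, h⟩ :=
    fun w idx => rfl
  have hq : ∀ idx : ι, (idx.1 : ℕ) < (i : ℕ) → q idx := by
    intro idx hlt l heq
    rw [heq] at hlt
    exact lt_irrefl _ hlt
  have hc : ∀ w, hatAct n H a s (V w) i (le_of_lt i.2) =
      hatAct n H a s (V 0) i (le_of_lt i.2) := by
    intro w
    refine hatAct_congr n H a s i (le_of_lt i.2) fun idx hlt => ?_
    rw [hVcoord, hVcoord, dif_pos (hq idx hlt), dif_pos (hq idx hlt)]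
  set c : Fin (n i) → ℝ := fun l => hatAct n H a s (V 0) i (le_of_lt i.2) l with hcdef
  let colIdx : Fin (n i) → {idx // ¬ q idx} :=
    fun l => ⟨⟨i, (l, j)⟩, fun hq' => hq' l rfl⟩
  have hInj : Function.Injective colIdx := by
    intro l l' hll
    have h2 : (⟨i, (l, j)⟩ : WeightIdx n H) = ⟨i, (l', j)⟩ := congrArg Subtype.val hll
    have h3 := (Sigma.mk.inj_iff.mp h2).2
    exact (Prod.ext_iff.mp (eq_of_heq h3)).1
  have hPreV : ∀ w, hatPre n H a s (V w) i i.2 j = ∑ l : Fin (n i), w (colIdx l) * c l := by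
    intro w
    unfold hatPre
    refine Finset.sum_congr rfl fun l _ => ?_
    rw [hc w]
    congr 1
    rw [hVcoord]
    exact dif_neg (colIdx l).2
  by_cases hcz : ∃ l, c l ≠ 0
  · obtain ⟨l0, hl0⟩ := hcz
    let φ : ((∀ idx : {idx // ¬ q idx}, ℝ)) →ₗ[ℝ] ℝ :=
      ∑ l : Fin (n i), c l • LinearMap.proj (R := ℝ) (φ := fun _ => ℝ) (colIdx l)
    have hφapp : ∀ w, φ w = ∑ l : Fin (n i), c l * w (colIdx l) := by
      intro w
      simp [φ, LinearMap.sum_apply, smul_eq_mul]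
    have hφsingle : φ (Pi.single (colIdx l0) 1) = c l0 := by
      rw [hφapp]
      rw [Finset.sum_eq_single l0]
      · rw [Pi.single_apply, if_pos rfl, mul_one]
      · intro l _ hl
        rw [Pi.single_apply, if_neg (fun h => hl (hInj h)), mul_zero]
      · intro h; exact absurd (Finset.mem_univ l0) h
    have hker : LinearMap.ker φ ≠ ⊤ := by
      intro htop
      have hmem : (Pi.single (colIdx l0) 1 : (∀ idx : {idx // ¬ q idx}, ℝ)) ∈
          LinearMap.ker φ := htop ▸ Submodule.mem_top
      rw [LinearMap.mem_ker, hφsingle] at hmem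
      exact hl0 hmem
    refine measure_mono_null ?_ (Measure.addHaar_submodule volume (LinearMap.ker φ) hker)
    intro w hw
    have hw' : V w ∈ N := hw
    obtain ⟨hz, -⟩ := hw'
    rw [hPreV w] at hz
    show φ w = 0
    rw [hφapp, Finset.sum_congr rfl fun l _ => mul_comm (c l) (w (colIdx l))]
    exact hz
  · refine measure_mono_null (fun w hw => ?_) (measure_empty (μ := volume))
    exfalso
    have hw' : V w ∈ N := hw
    obtain ⟨-, l, hl⟩ := hw'
    rw [hc w] at hl
    exact hcz ⟨l, hl⟩

lemma badSet_null : volume (badSet n H a) = 0 := by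
  unfold badSet
  exact measure_iUnion_null fun s => measure_iUnion_null fun i =>
    measure_iUnion_null fun j => piece_null n H a s i j

end NetAux

namespace NetAux

variable (n : ℕ → ℕ) (H : ℕ) (a : EuclideanSpace ℝ (Fin (n 0)))

lemma caseB (hout : n (H + 1) = 1) (W : WeightSpace n H) (k1 : ℕ) (hk1 : k1 + 1 ≤ H + 1)
    (hmin : ∀ m, m < k1 → ∀ (h : m + 1 ≤ H + 1) (j : Fin (n (m + 1))),
      netPre n H a W m h j ≠ 0)
    (hAct0 : ∀ l, netAct n H W a k1 (Nat.le_of_succ_le hk1) l = 0) :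
    ContDiffAt ℝ (⊤ : ℕ∞) (fun V => netOut n H hout V a) W := by
  cases k1 with
  | zero =>
    have hall : ∀ V : WeightSpace n H, netOut n H hout V a = 0 := by
      intro V
      have h1 : ∀ l, netAct n H V a 0 (by omega) l = 0 := hAct0
      unfold netOut
      exact netAct_zero_from n H a V 0 (by omega) h1 (H + 1) le_rfl (by omega) _
    have heq : (fun V => netOut n H hout V a) = fun _ => 0 := funext hall
    rw [heq]
    exact contDiffAt_const
  | succ k0 =>
    have hk0 : k0 + 1 ≤ H + 1 := Nat.le_of_succ_le hk1
    have hneg : ∀ l : Fin (n (k0 + 1)), netPre n H a W k0 hk0 l < 0 := by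
      intro l
      have hne : netPre n H a W k0 hk0 l ≠ 0 := hmin k0 (by omega) hk0 l
      have hle : netPre n H a W k0 hk0 l ≤ 0 := by
        have hz := hAct0 l
        rw [netAct_succ] at hz
        exact le_trans (le_max_left _ _) (le_of_eq hz)
      exact lt_of_le_of_ne hle hne
    have hev : ∀ᶠ V in nhds W, ∀ l : Fin (n (k0 + 1)),
        netPre n H a V k0 hk0 l < 0 := by
      rw [Filter.eventually_all]
      intro l
      exact (isOpen_Iio.preimage (continuous_netPre n H a k0 hk0 l)).mem_nhds (hneg l)
    have hev0 : (fun V => netOut n H hout V a) =ᶠ[nhds W] fun _ => (0 : ℝ) := by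
      filter_upwards [hev] with V hV
      have h1 : ∀ l, netAct n H V a (k0 + 1) hk0 l = 0 := by
        intro l
        rw [netAct_succ]
        exact max_eq_right (hV l).le
      unfold netOut
      exact netAct_zero_from n H a V (k0 + 1) hk0 h1 (H + 1) le_rfl hk0 _
    exact (contDiffAt_const (c := (0 : ℝ))).congr_of_eventuallyEq hev0

lemma contDiffAt_of_not_bad (hout : n (H + 1) = 1) (W : WeightSpace n H)
    (hW : W ∉ badSet n H a) :
    ContDiffAt ℝ (⊤ : ℕ∞) (fun V => netOut n H hout V a) W := by
  classical
  by_cases hA : ∀ (k : ℕ) (h : k + 1 ≤ H + 1) (j : Fin (n (k + 1))),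
      netPre n H a W k h j ≠ 0
  · -- all preactivations nonzero at W
    set s := patt n H a W with hs_def
    have hev : ∀ᶠ V in nhds W, ∀ (i : Fin (H + 1)) (j : Fin (n (i + 1))),
        (s i j = true → 0 < hatPre n H a s V i i.2 j) ∧
        (s i j = false → hatPre n H a s V i i.2 j < 0) := by
      rw [Filter.eventually_all]
      intro i
      rw [Filter.eventually_all]
      intro j
      have hcont := (contDiff_hatPre n H a s i i.2 j).continuous
      have hWeq : hatPre n H a s W i i.2 j = netPre n H a W i i.2 j :=
        hatPre_patt n H a W i i.2 j
      rcases Bool.eq_false_or_eq_true (s i j) with hs | hs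
      · have hpos : 0 < hatPre n H a s W i i.2 j := by
          rw [hWeq]; exact of_decide_eq_true hs
        filter_upwards [(isOpen_Ioi.preimage hcont).mem_nhds hpos] with V hV
        exact ⟨fun _ => hV, fun hf => (by rw [hs] at hf; cases hf)⟩
      · have hneg : hatPre n H a s W i i.2 j < 0 := by
          rw [hWeq]
          have hnp : ¬ 0 < netPre n H a W i i.2 j := of_decide_eq_false hs
          exact lt_of_le_of_ne (not_lt.1 hnp) (hA i i.2 j)
        filter_upwards [(isOpen_Iio.preimage hcont).mem_nhds hneg] with V hV
        exact ⟨fun hf => (by rw [hs] at hf; cases hf), fun _ => hV⟩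
    have hout_eq : (fun V => netOut n H hout V a) =ᶠ[nhds W]
        fun V => hatAct n H a s V (H + 1) le_rfl ⟨0, by omega⟩ := by
      filter_upwards [hev] with V hV
      unfold netOut
      rw [act_eq_of_signs n H a s V hV (H + 1) le_rfl]
    exact ((contDiff_hatAct n H a s (H + 1) le_rfl ⟨0, by omega⟩).contDiffAt).congr_of_eventuallyEq
      hout_eq
  · -- some preactivation vanishes at W
    push_neg at hA
    have hex : ∃ k, ∃ (h : k + 1 ≤ H + 1) (j : Fin (n (k + 1))),
        netPre n H a W k h j = 0 := hA
    set s := patt n H a W with hs_def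
    obtain ⟨hk1, j0, hj0⟩ := Nat.find_spec hex
    have hmin : ∀ m, m < Nat.find hex → ∀ (h : m + 1 ≤ H + 1) (j : Fin (n (m + 1))),
        netPre n H a W m h j ≠ 0 :=
      fun m hm h j h0 => Nat.find_min hex hm ⟨h, j, h0⟩
    have hnotin : ¬ (hatPre n H a s W (Nat.find hex) hk1 j0 = 0 ∧
        ∃ l, hatAct n H a s W (Nat.find hex) (Nat.le_of_succ_le hk1) l ≠ 0) := by
      intro hmem
      exact hW (Set.mem_iUnion.mpr ⟨s, Set.mem_iUnion.mpr ⟨⟨Nat.find hex, hk1⟩,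
        Set.mem_iUnion.mpr ⟨j0, hmem⟩⟩⟩)
    have hAct0 : ∀ l, netAct n H W a (Nat.find hex) (Nat.le_of_succ_le hk1) l = 0 := by
      have h1 : hatPre n H a s W (Nat.find hex) hk1 j0 = 0 := by
        rw [hs_def, hatPre_patt]; exact hj0
      intro l
      by_contra hne
      refine hnotin ⟨h1, ⟨l, ?_⟩⟩
      rw [hs_def, hatAct_patt n H a W (Nat.find hex) (Nat.le_of_succ_le hk1)]
      exact hne
    exact caseB n H a hout W (Nat.find hex) hk1 hmin hAct0

end NetAux

/-- for any fixed input `a`, the map `W ↦ y(a,W)` is `C^∞` at every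
point outside a set of Lebesgue measure zero in weight space. -/
theorem relu_network_smooth_almost_everywhere (n : ℕ → ℕ) (H : ℕ)
    (hout : n (H + 1) = 1) (hwidth : ∀ i, 1 ≤ i → i ≤ H → 1 < n i)
    (a : EuclideanSpace ℝ (Fin (n 0))) :
    ∃ Z : Set (WeightSpace n H), MeasureTheory.volume Z = 0 ∧
      ∀ W ∉ Z, ContDiffAt ℝ (⊤ : ℕ∞) (fun V => netOut n H hout V a) W :=
  ⟨NetAux.badSet n H a, NetAux.badSet_null n H a,
    fun W hW => NetAux.contDiffAt_of_not_bad n H a hout W hW⟩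
end

section
/- On any open set U ⊆ ℝ^m on which the training loss ℓ is infinitely differentiable, ℓ is subharmonic: the Laplacian satisfies Δℓ(W) ≥ 0 for all W ∈ U. Moreover, for each weight coordinate w, the pure second partial derivative satisfies ∂²ℓ/∂w²(W) = (1/N) Σ_{i=1}^N (∂y(aᵢ,W)/∂w)² ≥ 0 for all W ∈ U. -/
open scoped BigOperators

/-- `g` agrees with an affine function on a right neighborhood of `t₀`. -/
def RightAff (g : ℝ → ℝ) (t₀ : ℝ) : Prop :=
  ∃ ε > (0:ℝ), ∃ α β : ℝ, ∀ t ∈ Set.Ico t₀ (t₀ + ε), g t = α * t + β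

def LeftAff (g : ℝ → ℝ) (t₀ : ℝ) : Prop :=
  ∃ ε > (0:ℝ), ∃ α β : ℝ, ∀ t ∈ Set.Ioc (t₀ - ε) t₀, g t = α * t + β

def LocAff (g : ℝ → ℝ) (t₀ : ℝ) : Prop := RightAff g t₀ ∧ LeftAff g t₀

theorem LocAff.affine (α β t₀ : ℝ) : LocAff (fun t => α * t + β) t₀ :=
  ⟨⟨1, one_pos, α, β, fun _ _ => rfl⟩, ⟨1, one_pos, α, β, fun _ _ => rfl⟩⟩

theorem LocAff.const (b t₀ : ℝ) : LocAff (fun _ => b) t₀ := by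
  have := LocAff.affine 0 b t₀
  simpa using this

theorem LocAff.add {g h : ℝ → ℝ} {t₀ : ℝ} (hg : LocAff g t₀) (hh : LocAff h t₀) :
    LocAff (fun t => g t + h t) t₀ := by
  obtain ⟨⟨ε₁, hε₁, α₁, β₁, h1⟩, ⟨ε₂, hε₂, α₂, β₂, h2⟩⟩ := hg
  obtain ⟨⟨ε₃, hε₃, α₃, β₃, h3⟩, ⟨ε₄, hε₄, α₄, β₄, h4⟩⟩ := hh
  constructor
  · refine ⟨min ε₁ ε₃, lt_min hε₁ hε₃, α₁ + α₃, β₁ + β₃, fun t ht => ?_⟩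
    obtain ⟨ht1, ht2⟩ := ht
    show g t + h t = _
    rw [h1 t ⟨ht1, lt_of_lt_of_le ht2 (by linarith [min_le_left ε₁ ε₃])⟩,
       h3 t ⟨ht1, lt_of_lt_of_le ht2 (by linarith [min_le_right ε₁ ε₃])⟩]
    ring
  · refine ⟨min ε₂ ε₄, lt_min hε₂ hε₄, α₂ + α₄, β₂ + β₄, fun t ht => ?_⟩
    obtain ⟨ht1, ht2⟩ := ht
    show g t + h t = _
    rw [h2 t ⟨lt_of_le_of_lt (by linarith [min_le_left ε₂ ε₄]) ht1, ht2⟩,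
       h4 t ⟨lt_of_le_of_lt (by linarith [min_le_right ε₂ ε₄]) ht1, ht2⟩]
    ring

theorem LocAff.const_mul {g : ℝ → ℝ} {t₀ : ℝ} (b : ℝ) (hg : LocAff g t₀) :
    LocAff (fun t => b * g t) t₀ := by
  obtain ⟨⟨ε₁, hε₁, α₁, β₁, h1⟩, ⟨ε₂, hε₂, α₂, β₂, h2⟩⟩ := hg
  exact ⟨⟨ε₁, hε₁, b * α₁, b * β₁, fun t ht => by show b * g t = _; rw [h1 t ht]; ring⟩,
    ⟨ε₂, hε₂, b * α₂, b * β₂, fun t ht => by show b * g t = _; rw [h2 t ht]; ring⟩⟩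

theorem LocAff.sum {ι : Type*} (s : Finset ι) (g : ι → ℝ → ℝ) {t₀ : ℝ}
    (hg : ∀ i ∈ s, LocAff (g i) t₀) :
    LocAff (fun t => ∑ i ∈ s, g i t) t₀ := by
  classical
  induction s using Finset.induction with
  | empty => simpa using LocAff.const 0 t₀
  | @insert x s' hx ih =>
    simp only [Finset.sum_insert hx]
    exact LocAff.add (hg x (Finset.mem_insert_self x s'))
      (ih fun i hi => hg i (Finset.mem_insert_of_mem hi))

theorem RightAff.relu {g : ℝ → ℝ} {t₀ : ℝ} (hg : RightAff g t₀) :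
    RightAff (fun t => max (g t) 0) t₀ := by
  obtain ⟨ε, hε, α, β, h⟩ := hg
  rcases lt_trichotomy (α * t₀ + β) 0 with hneg | hzero | hpos
  · refine ⟨min ε (-(α * t₀ + β) / (|α| + 1)),
      lt_min hε (div_pos (by linarith) (by positivity)), 0, 0, fun t ht => ?_⟩
    obtain ⟨ht1, ht2⟩ := ht
    have h1 : t < t₀ + ε := lt_of_lt_of_le ht2
      (by linarith [min_le_left ε (-(α * t₀ + β) / (|α| + 1))])
    have h2 : t - t₀ < -(α * t₀ + β) / (|α| + 1) := by
      have := min_le_right ε (-(α * t₀ + β) / (|α| + 1)); linarith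
    have hb : (0:ℝ) < |α| + 1 := by positivity
    have hgneg : g t < 0 := by
      rw [h t ⟨ht1, h1⟩]
      nlinarith [le_abs_self α, neg_abs_le α, sub_nonneg.mpr ht1,
        (lt_div_iff₀ hb).mp h2, abs_nonneg α]
    show max (g t) 0 = _
    simp [max_eq_right (le_of_lt hgneg)]
  · rcases le_or_gt 0 α with hα | hα
    · refine ⟨ε, hε, α, β, fun t ht => ?_⟩
      have hgt := h t ht
      have hnn : 0 ≤ α * t + β := by nlinarith [ht.1]
      show max (g t) 0 = _
      rw [hgt, max_eq_left hnn]
    · refine ⟨ε, hε, 0, 0, fun t ht => ?_⟩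
      have hgt := h t ht
      have hnp : α * t + β ≤ 0 := by nlinarith [ht.1]
      show max (g t) 0 = _
      rw [hgt, max_eq_right hnp]; ring
  · refine ⟨min ε ((α * t₀ + β) / (|α| + 1)),
      lt_min hε (div_pos hpos (by positivity)), α, β, fun t ht => ?_⟩
    obtain ⟨ht1, ht2⟩ := ht
    have h1 : t < t₀ + ε := lt_of_lt_of_le ht2
      (by linarith [min_le_left ε ((α * t₀ + β) / (|α| + 1))])
    have h2 : t - t₀ < (α * t₀ + β) / (|α| + 1) := by
      have := min_le_right ε ((α * t₀ + β) / (|α| + 1)); linarith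
    have hb : (0:ℝ) < |α| + 1 := by positivity
    have hpos' : 0 < α * t + β := by
      nlinarith [le_abs_self α, neg_abs_le α, sub_nonneg.mpr ht1,
        (lt_div_iff₀ hb).mp h2, abs_nonneg α]
    show max (g t) 0 = _
    rw [h t ⟨ht1, h1⟩, max_eq_left (le_of_lt hpos')]

theorem LeftAff.relu {g : ℝ → ℝ} {t₀ : ℝ} (hg : LeftAff g t₀) :
    LeftAff (fun t => max (g t) 0) t₀ := by
  obtain ⟨ε, hε, α, β, h⟩ := hg
  rcases lt_trichotomy (α * t₀ + β) 0 with hneg | hzero | hpos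
  · refine ⟨min ε (-(α * t₀ + β) / (|α| + 1)),
      lt_min hε (div_pos (by linarith) (by positivity)), 0, 0, fun t ht => ?_⟩
    obtain ⟨ht1, ht2⟩ := ht
    have h1 : t₀ - ε < t := lt_of_le_of_lt
      (by linarith [min_le_left ε (-(α * t₀ + β) / (|α| + 1))]) ht1
    have h2 : t₀ - t < -(α * t₀ + β) / (|α| + 1) := by
      have := min_le_right ε (-(α * t₀ + β) / (|α| + 1)); linarith
    have hb : (0:ℝ) < |α| + 1 := by positivity
    have hgneg : g t < 0 := by
      rw [h t ⟨h1, ht2⟩]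
      nlinarith [neg_abs_le α, le_abs_self α, sub_nonneg.mpr ht2,
        (lt_div_iff₀ hb).mp h2, abs_nonneg α]
    show max (g t) 0 = _
    simp [max_eq_right (le_of_lt hgneg)]
  · rcases le_or_gt 0 α with hα | hα
    · refine ⟨ε, hε, 0, 0, fun t ht => ?_⟩
      have hgt := h t ht
      have hnp : α * t + β ≤ 0 := by nlinarith [ht.2]
      show max (g t) 0 = _
      rw [hgt, max_eq_right hnp]; ring
    · refine ⟨ε, hε, α, β, fun t ht => ?_⟩
      have hgt := h t ht
      have hnn : 0 ≤ α * t + β := by nlinarith [ht.2]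
      show max (g t) 0 = _
      rw [hgt, max_eq_left hnn]
  · refine ⟨min ε ((α * t₀ + β) / (|α| + 1)),
      lt_min hε (div_pos hpos (by positivity)), α, β, fun t ht => ?_⟩
    obtain ⟨ht1, ht2⟩ := ht
    have h1 : t₀ - ε < t := lt_of_le_of_lt
      (by linarith [min_le_left ε ((α * t₀ + β) / (|α| + 1))]) ht1
    have h2 : t₀ - t < (α * t₀ + β) / (|α| + 1) := by
      have := min_le_right ε ((α * t₀ + β) / (|α| + 1)); linarith
    have hb : (0:ℝ) < |α| + 1 := by positivity
    have hpos' : 0 < α * t + β := by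
      nlinarith [le_abs_self α, neg_abs_le α, sub_nonneg.mpr ht2,
        (lt_div_iff₀ hb).mp h2, abs_nonneg α]
    show max (g t) 0 = _
    rw [h t ⟨h1, ht2⟩, max_eq_left (le_of_lt hpos')]

theorem LocAff.relu {g : ℝ → ℝ} {t₀ : ℝ} (hg : LocAff g t₀) :
    LocAff (fun t => max (g t) 0) t₀ :=
  ⟨hg.1.relu, hg.2.relu⟩

/-- A locally one-sided affine function differentiable at `0` is affine near `0`. -/
theorem LocAff.eventually_affine {g : ℝ → ℝ} (hg : LocAff g 0)
    (hd : DifferentiableAt ℝ g 0) :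
    ∀ᶠ t in nhds (0:ℝ), g t = deriv g 0 * t + g 0 := by
  obtain ⟨⟨ε₁, hε₁, α₁, β₁, h1⟩, ⟨ε₂, hε₂, α₂, β₂, h2⟩⟩ := hg
  have hg01 : g 0 = β₁ := by have := h1 0 ⟨le_refl _, by linarith⟩; simpa using this
  have hg02 : g 0 = β₂ := by have := h2 0 ⟨by linarith, le_refl _⟩; simpa using this
  -- right derivative
  have haff1 : HasDerivAt (fun t : ℝ => α₁ * t + β₁) α₁ 0 := by
    simpa using ((hasDerivAt_id (0:ℝ)).const_mul α₁).add_const β₁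
  have hmem1 : Set.Ico (0:ℝ) ε₁ ∈ nhdsWithin (0:ℝ) (Set.Ici 0) := by
    rw [← Set.Ici_inter_Iio]
    exact Filter.inter_mem self_mem_nhdsWithin
      (nhdsWithin_le_nhds (Iio_mem_nhds hε₁))
  have hR : HasDerivWithinAt g α₁ (Set.Ici 0) 0 := by
    refine (haff1.hasDerivWithinAt (s := Set.Ici 0)).congr_of_eventuallyEq ?_ (by simpa using hg01)
    filter_upwards [hmem1] with t ht
    simpa using h1 t (by simpa using ht)
  have hL : HasDerivWithinAt g α₂ (Set.Iic 0) 0 := by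
    have haff2 : HasDerivAt (fun t : ℝ => α₂ * t + β₂) α₂ 0 := by
      simpa using ((hasDerivAt_id (0:ℝ)).const_mul α₂).add_const β₂
    have hmem2 : Set.Ioc (-ε₂) (0:ℝ) ∈ nhdsWithin (0:ℝ) (Set.Iic 0) := by
      rw [← Set.Ioi_inter_Iic]
      exact Filter.inter_mem (nhdsWithin_le_nhds (Ioi_mem_nhds (by linarith)))
        self_mem_nhdsWithin
    refine (haff2.hasDerivWithinAt (s := Set.Iic 0)).congr_of_eventuallyEq ?_ (by simpa using hg02)
    filter_upwards [hmem2] with t ht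
    simpa using h2 t (by simpa using ht)
  have hda : HasDerivAt g (deriv g 0) 0 := hd.hasDerivAt
  have hα₁ : α₁ = deriv g 0 := by
    have e1 := hR.derivWithin (uniqueDiffOn_Ici 0 0 Set.self_mem_Ici)
    have e2 := (hda.hasDerivWithinAt (s := Set.Ici 0)).derivWithin
      (uniqueDiffOn_Ici 0 0 Set.self_mem_Ici)
    rw [← e1, ← e2]
  have hα₂ : α₂ = deriv g 0 := by
    have e1 := hL.derivWithin (uniqueDiffOn_Iic 0 0 Set.self_mem_Iic)
    have e2 := (hda.hasDerivWithinAt (s := Set.Iic 0)).derivWithin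
      (uniqueDiffOn_Iic 0 0 Set.self_mem_Iic)
    rw [← e1, ← e2]
  have hball : Set.Ioo (-(min ε₁ ε₂)) (min ε₁ ε₂) ∈ nhds (0:ℝ) :=
    Ioo_mem_nhds (by simp [hε₁, hε₂]) (by simp [hε₁, hε₂] : (0:ℝ) < min ε₁ ε₂)
  filter_upwards [hball] with t ht
  obtain ⟨ht1, ht2⟩ := ht
  rcases le_or_gt 0 t with htn | htn
  · rw [h1 t ⟨htn, by simp only [zero_add]; exact lt_of_lt_of_le ht2 (min_le_left _ _)⟩,
      hα₁, hg01]
  · rw [h2 t ⟨by have := min_le_right ε₁ ε₂; simp only [zero_sub]; linarith, le_of_lt htn⟩,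
      hα₂, hg02]

-- evaluation of the line `W + t • single c 1` at an index
theorem line_apply (n : ℕ → ℕ) (H : ℕ) (W : WeightSpace n H) (c idx : WeightIdx n H) (t : ℝ) :
    (W + t • EuclideanSpace.single c (1 : ℝ)) idx
      = W idx + t * (if idx = c then 1 else 0) := by
  classical
  simp [EuclideanSpace.single_apply]

theorem line_apply_ne (n : ℕ → ℕ) (H : ℕ) (W : WeightSpace n H) (c idx : WeightIdx n H)
    (t : ℝ) (h : idx ≠ c) :
    (W + t • EuclideanSpace.single c (1 : ℝ)) idx = W idx := by
  classical
  simp [line_apply, h]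

/-- Layers up to the layer of `c` do not depend on `t`. -/
theorem netAct_low_const (n : ℕ → ℕ) (H : ℕ) (W : WeightSpace n H)
    (a : EuclideanSpace ℝ (Fin (n 0))) (c : WeightIdx n H) (t : ℝ) :
    ∀ k (h : k ≤ H + 1), k ≤ c.1.val →
      netAct n H (W + t • EuclideanSpace.single c (1 : ℝ)) a k h
        = netAct n H W a k h := by
  intro k
  induction k with
  | zero => intro h _; rfl
  | succ k ih =>
    intro h hk
    funext j
    show max _ 0 = max _ 0
    congr 1
    refine Finset.sum_congr rfl fun l _ => ?_
    have hne : (⟨⟨k, h⟩, (l, j)⟩ : WeightIdx n H) ≠ c := by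
      intro he
      have : (⟨k, h⟩ : Fin (H+1)) = c.1 := congrArg Sigma.fst he
      have : k = c.1.val := congrArg Fin.val this
      omega
    rw [line_apply_ne n H W c _ t hne, ih (Nat.le_of_succ_le h) (by omega)]

/-- Layers above the layer of `c` are locally one-sided affine in `t`. -/
theorem netAct_locAff (n : ℕ → ℕ) (H : ℕ) (W : WeightSpace n H)
    (a : EuclideanSpace ℝ (Fin (n 0))) (c : WeightIdx n H) :
    ∀ k (h : k ≤ H + 1), c.1.val < k → ∀ (l : Fin (n k)) (t₀ : ℝ),
      LocAff (fun t : ℝ => netAct n H (W + t • EuclideanSpace.single c (1 : ℝ)) a k h l) t₀ := by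
  intro k
  induction k with
  | zero => intro h hk; omega
  | succ k ih =>
    intro h hk l t₀
    have hsum : LocAff (fun t => ∑ l' : Fin (n k),
        (W + t • EuclideanSpace.single c (1 : ℝ)) ⟨⟨k, h⟩, (l', l)⟩ *
          netAct n H (W + t • EuclideanSpace.single c (1 : ℝ)) a k (Nat.le_of_succ_le h) l') t₀ := by
      refine LocAff.sum Finset.univ _ fun l' _ => ?_
      rcases Nat.lt_or_ge c.1.val k with hck | hck
      · -- layer k is above c: weight is constant, inner activation is LocAff
        have hne : (⟨⟨k, h⟩, (l', l)⟩ : WeightIdx n H) ≠ c := by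
          intro he
          have : (⟨k, h⟩ : Fin (H+1)) = c.1 := congrArg Sigma.fst he
          have : k = c.1.val := congrArg Fin.val this
          omega
        have : (fun t : ℝ => (W + t • EuclideanSpace.single c (1 : ℝ)) ⟨⟨k, h⟩, (l', l)⟩ *
            netAct n H (W + t • EuclideanSpace.single c (1 : ℝ)) a k (Nat.le_of_succ_le h) l')
            = fun t : ℝ => W ⟨⟨k, h⟩, (l', l)⟩ *
              netAct n H (W + t • EuclideanSpace.single c (1 : ℝ)) a k (Nat.le_of_succ_le h) l' := by
          funext t; rw [line_apply_ne n H W c _ t hne]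
        rw [this]
        exact LocAff.const_mul _ (ih (Nat.le_of_succ_le h) hck l' t₀)
      · -- layer k is the layer of c: inner activation constant, weight affine
        have hk' : k = c.1.val := by omega
        have hconst := netAct_low_const n H W a c
        have : (fun t : ℝ => (W + t • EuclideanSpace.single c (1 : ℝ)) ⟨⟨k, h⟩, (l', l)⟩ *
            netAct n H (W + t • EuclideanSpace.single c (1 : ℝ)) a k (Nat.le_of_succ_le h) l')
            = fun t : ℝ => ((if (⟨⟨k, h⟩, (l', l)⟩ : WeightIdx n H) = c then 1 else 0) *
                netAct n H W a k (Nat.le_of_succ_le h) l') * t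
              + W ⟨⟨k, h⟩, (l', l)⟩ * netAct n H W a k (Nat.le_of_succ_le h) l' := by
          funext t
          rw [hconst t k (Nat.le_of_succ_le h) (by omega), line_apply]
          ring
        rw [this]
        exact LocAff.affine _ _ t₀
    have : (fun t : ℝ => netAct n H (W + t • EuclideanSpace.single c (1 : ℝ)) a (k+1) h l)
        = fun t : ℝ => max ((fun t : ℝ => ∑ l' : Fin (n k),
            (W + t • EuclideanSpace.single c (1 : ℝ)) ⟨⟨k, h⟩, (l', l)⟩ *
              netAct n H (W + t • EuclideanSpace.single c (1 : ℝ)) a k (Nat.le_of_succ_le h) l') t) 0 := rfl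
    rw [this]
    exact hsum.relu

/-- on any open set `U` on which the training loss `ℓ` (and the network
outputs `y(aᵢ,·)`) are infinitely differentiable, each pure second partial derivative
of `ℓ` equals `(1/N) Σᵢ (∂y(aᵢ,W)/∂w)² ≥ 0`, and hence the Laplacian satisfies
`Δℓ(W) ≥ 0` for all `W ∈ U`, i.e. `ℓ` is subharmonic on `U`. -/
theorem loss_subharmonic_on_smooth_set (n : ℕ → ℕ) (H : ℕ)
    (hout : n (H + 1) = 1) (hwidth : ∀ i, 1 ≤ i → i ≤ H → 1 < n i)
    (N : ℕ) (a : Fin N → EuclideanSpace ℝ (Fin (n 0)))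
    (f : EuclideanSpace ℝ (Fin (n 0)) → ℝ)
    (U : Set (WeightSpace n H)) (hU : IsOpen U)
    (hsmooth : ContDiffOn ℝ (⊤ : ℕ∞) (loss n H N hout a f) U)
    (hy : ∀ i, ContDiffOn ℝ (⊤ : ℕ∞) (fun W => netOut n H hout W (a i)) U) :
    ∀ W ∈ U,
      (∀ c : WeightIdx n H,
        deriv (deriv fun t : ℝ =>
            loss n H N hout a f (W + t • EuclideanSpace.single c (1 : ℝ))) 0 =
          (1 / (N : ℝ)) * ∑ i, (deriv (fun t : ℝ =>
            netOut n H hout (W + t • EuclideanSpace.single c (1 : ℝ)) (a i)) 0) ^ 2 ∧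
        0 ≤ deriv (deriv fun t : ℝ =>
            loss n H N hout a f (W + t • EuclideanSpace.single c (1 : ℝ))) 0) ∧
      0 ≤ ∑ c : WeightIdx n H,
        deriv (deriv fun t : ℝ =>
            loss n H N hout a f (W + t • EuclideanSpace.single c (1 : ℝ))) 0 := by
  intro W hWU
  have key : ∀ c : WeightIdx n H,
      deriv (deriv fun t : ℝ =>
          loss n H N hout a f (W + t • EuclideanSpace.single c (1 : ℝ))) 0 =
        (1 / (N : ℝ)) * ∑ i, (deriv (fun t : ℝ =>
          netOut n H hout (W + t • EuclideanSpace.single c (1 : ℝ)) (a i)) 0) ^ 2 := by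
    intro c
    set v : WeightSpace n H := EuclideanSpace.single c (1 : ℝ) with hv
    set g : Fin N → ℝ → ℝ := fun i t => netOut n H hout (W + t • v) (a i) with hgdef
    set d : Fin N → ℝ := fun i => deriv (g i) 0 with hd
    set b : Fin N → ℝ := fun i => f (a i) - g i 0 with hb
    -- each `g i` is affine near `0`
    have hgaff : ∀ i, ∀ᶠ t in nhds (0:ℝ), g i t = d i * t + g i 0 := by
      intro i
      have hloc : LocAff (g i) 0 := by
        have := netAct_locAff n H W (a i) c (H + 1) le_rfl c.1.isLt
          ⟨0, by omega⟩ 0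
        exact this
      have hdiff : DifferentiableAt ℝ (g i) 0 := by
        have h0 : (fun t : ℝ => W + t • v) 0 = W := by simp
        have hyW : DifferentiableAt ℝ (fun W' => netOut n H hout W' (a i))
            ((fun t : ℝ => W + t • v) 0) := by
          rw [h0]
          exact (((hy i).contDiffAt (hU.mem_nhds hWU)).differentiableAt (by simp))
        have hline : DifferentiableAt ℝ (fun t : ℝ => W + t • v) 0 :=
          (differentiableAt_const W).add ((differentiableAt_id).smul_const v)
        exact hyW.comp 0 hline
      exact hloc.eventually_affine hdiff
    -- the loss along the line is eventually an explicit quadratic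
    have hq : (fun t : ℝ => loss n H N hout a f (W + t • v)) =ᶠ[nhds (0:ℝ)]
        fun t => (1 / (2 * (N : ℝ))) * ∑ i, (b i - d i * t) ^ 2 := by
      have hall : ∀ᶠ t in nhds (0:ℝ), ∀ i, g i t = d i * t + g i 0 :=
        (Filter.eventually_all).mpr hgaff
      filter_upwards [hall] with t ht
      show (1 / (2 * (N : ℝ))) * ∑ i, (f (a i) - g i t) ^ 2 = _
      congr 1
      refine Finset.sum_congr rfl fun i _ => ?_
      rw [ht i, hb]
      ring
    -- derivatives of the quadratic
    have hq1 : ∀ t : ℝ, HasDerivAt (fun t => (1 / (2 * (N : ℝ))) * ∑ i, (b i - d i * t) ^ 2)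
        ((1 / (2 * (N : ℝ))) * ∑ i, (2 * d i * d i * t - 2 * b i * d i)) t := by
      intro t
      refine HasDerivAt.const_mul _ (HasDerivAt.fun_sum fun i _ => ?_)
      have h1 : HasDerivAt (fun t : ℝ => b i - d i * t) (-(d i)) t :=
        (((hasDerivAt_id t).const_mul (d i)).const_sub (b i)).congr_deriv (by ring)
      exact (h1.pow 2).congr_deriv (by push_cast; ring)
    have hderivq : deriv (fun t => (1 / (2 * (N : ℝ))) * ∑ i, (b i - d i * t) ^ 2)
        = fun t => (1 / (2 * (N : ℝ))) * ∑ i, (2 * d i * d i * t - 2 * b i * d i) := by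
      funext t; exact (hq1 t).deriv
    have hq2 : HasDerivAt
        (fun t : ℝ => (1 / (2 * (N : ℝ))) * ∑ i, (2 * d i * d i * t - 2 * b i * d i))
        ((1 / (2 * (N : ℝ))) * ∑ i, (2 * d i * d i)) 0 := by
      refine HasDerivAt.const_mul _ (HasDerivAt.fun_sum fun i _ => ?_)
      exact (((hasDerivAt_id (0:ℝ)).const_mul (2 * d i * d i)).sub_const
        (2 * b i * d i)).congr_deriv (by ring)
    -- chain everything
    have hstep1 : deriv (deriv fun t : ℝ => loss n H N hout a f (W + t • v)) 0
        = deriv (deriv fun t : ℝ => (1 / (2 * (N : ℝ))) * ∑ i, (b i - d i * t) ^ 2) 0 :=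
      (Filter.EventuallyEq.deriv hq).deriv_eq
    rw [hstep1, hderivq, hq2.deriv]
    have hsum : ∑ i, (2 * d i * d i) = 2 * ∑ i, d i ^ 2 := by
      rw [Finset.mul_sum]
      exact Finset.sum_congr rfl fun i _ => by ring
    rw [hsum]
    have hN : (1 : ℝ) / (2 * (N : ℝ)) * 2 = 1 / (N : ℝ) := by
      rcases Nat.eq_zero_or_pos N with h | h
      · simp [h]
      · have : (N : ℝ) ≠ 0 := Nat.cast_ne_zero.mpr (Nat.pos_iff_ne_zero.mp h)
        field_simp
    calc (1 / (2 * (N : ℝ))) * (2 * ∑ i, d i ^ 2)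
        = ((1 : ℝ) / (2 * (N : ℝ)) * 2) * ∑ i, d i ^ 2 := by ring
      _ = (1 / (N : ℝ)) * ∑ i, d i ^ 2 := by rw [hN]
  refine ⟨fun c => ⟨key c, ?_⟩, ?_⟩
  · rw [key c]; positivity
  · refine Finset.sum_nonneg fun c _ => ?_
    rw [key c]; positivity
end

section
/- Fix W ∈ ℝ^m and let ϕ : ℝ^m → ℝ be the loss function equal to ℓ but with all ReLU switch matrices S_j(aᵢ,W) held constant at their values determined by W and the data, i.e. ϕ(V) = (1/2N) Σ_{i=1}^N (f(aᵢ) − ỹ(aᵢ,V))² where ỹ(a,V) = S_{H+1}(a,W) V_Hᵀ S_H(a,W) V_{H-1}ᵀ ⋯ S_1(a,W) V₀ᵀ a. If ‖aᵢ‖₂ ≤ r for all 1 ≤ i ≤ N, then for every direction X ∈ ℝ^m, the second derivative of ϕ along the line through W in direction X satisfies (d²/dt²)|_{t=0} ϕ(W + tX) ≥ −√2 · H(H+1) · ‖W‖_*^{H−1} · ‖X‖² · r · ϕ(W)^{1/2}. -/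
open scoped BigOperators

/-- Activations of the network with the ReLU switches frozen at the values
`S_j(a, W)` determined by the weight `W` and the input `a`, evaluated at the
weight `V`:  `x̃_0 = a`, `x̃_{k+1} = S_{k+1}(a,W) (V_k^T x̃_k)`. -/
noncomputable def frozenAct (n : ℕ → ℕ) (H : ℕ) (W : WeightSpace n H)
    (a : EuclideanSpace ℝ (Fin (n 0))) (V : WeightSpace n H) :
    (k : ℕ) → k ≤ H + 1 → (Fin (n k) → ℝ)
  | 0, _ => a
  | k + 1, h => fun j =>
      (if 0 < ∑ l : Fin (n k), W ⟨⟨k, h⟩, (l, j)⟩ * netAct n H W a k (Nat.le_of_succ_le h) l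
        then (1 : ℝ) else 0) *
      ∑ l : Fin (n k), V ⟨⟨k, h⟩, (l, j)⟩ * frozenAct n H W a V k (Nat.le_of_succ_le h) l

/-- Scalar output `ỹ(a, V)` of the network with switches frozen as determined by `W`. -/
noncomputable def frozenOut (n : ℕ → ℕ) (H : ℕ) (hout : n (H + 1) = 1)
    (W : WeightSpace n H) (a : EuclideanSpace ℝ (Fin (n 0)))
    (V : WeightSpace n H) : ℝ :=
  frozenAct n H W a V (H + 1) le_rfl ⟨0, by omega⟩

/-- The loss `ϕ(V)` with switches frozen as determined by `W` and the data. -/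
noncomputable def frozenLoss (n : ℕ → ℕ) (H N : ℕ) (hout : n (H + 1) = 1)
    (a : Fin N → EuclideanSpace ℝ (Fin (n 0)))
    (f : EuclideanSpace ℝ (Fin (n 0)) → ℝ)
    (W : WeightSpace n H) (V : WeightSpace n H) : ℝ :=
  (1 / (2 * (N : ℝ))) * ∑ i, (f (a i) - frozenOut n H hout W (a i) V) ^ 2


/-! ### helpers -/

noncomputable def nrm {p : ℕ} (v : Fin p → ℝ) : ℝ :=
  ‖(WithLp.equiv 2 (Fin p → ℝ)).symm v‖

lemma nrm_eq {p : ℕ} (v : Fin p → ℝ) : nrm v = Real.sqrt (∑ j, v j ^ 2) := by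
  rw [nrm, EuclideanSpace.norm_eq]
  simp [Real.norm_eq_abs, sq_abs]

lemma nrm_nonneg {p : ℕ} (v : Fin p → ℝ) : 0 ≤ nrm v := norm_nonneg _

lemma nrm_le_nrm {p : ℕ} (u v : Fin p → ℝ) (h : ∀ j, u j ^ 2 ≤ v j ^ 2) :
    nrm u ≤ nrm v := by
  rw [nrm_eq, nrm_eq]
  exact Real.sqrt_le_sqrt (Finset.sum_le_sum fun j _ => h j)

lemma abs_le_nrm {p : ℕ} (v : Fin p → ℝ) (j : Fin p) : |v j| ≤ nrm v := by
  rw [nrm_eq, ← Real.sqrt_sq_eq_abs]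
  exact Real.sqrt_le_sqrt (Finset.single_le_sum (fun i _ => sq_nonneg (v i)) (Finset.mem_univ j))

lemma nrm_add_le {p : ℕ} (u v : Fin p → ℝ) :
    nrm (fun j => u j + v j) ≤ nrm u + nrm v :=
  norm_add_le ((WithLp.equiv 2 (Fin p → ℝ)).symm u) ((WithLp.equiv 2 (Fin p → ℝ)).symm v)

lemma nrm_const_mul {p : ℕ} (c : ℝ) (v : Fin p → ℝ) :
    nrm (fun j => c * v j) = |c| * nrm v := by
  have h : ((WithLp.equiv 2 (Fin p → ℝ)).symm (fun j => c * v j))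
      = c • ((WithLp.equiv 2 (Fin p → ℝ)).symm v) := rfl
  rw [nrm, h, norm_smul, Real.norm_eq_abs, nrm]

lemma opNorm2_nonneg {p q : ℕ} (M : Matrix (Fin p) (Fin q) ℝ) : 0 ≤ opNorm2 M :=
  norm_nonneg _

lemma nrm_mulVec_le {p q : ℕ} (M : Matrix (Fin p) (Fin q) ℝ) (u : Fin q → ℝ) :
    nrm (fun l => ∑ j, M l j * u j) ≤ opNorm2 M * nrm u := by
  have h1 : (LinearMap.toContinuousLinearMap (Matrix.toEuclideanLin M))
      ((WithLp.equiv 2 (Fin q → ℝ)).symm u)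
      = (WithLp.equiv 2 (Fin p → ℝ)).symm (M.mulVec u) := rfl
  have h2 := (LinearMap.toContinuousLinearMap (Matrix.toEuclideanLin M)).le_opNorm
    ((WithLp.equiv 2 (Fin q → ℝ)).symm u)
  rw [h1] at h2
  have h3 : (fun l => ∑ j, M l j * u j) = M.mulVec u := by
    funext l; simp [Matrix.mulVec, dotProduct]
  rw [h3]
  exact h2

lemma nrm_vecMul_le {p q : ℕ} (M : Matrix (Fin p) (Fin q) ℝ) (v : Fin p → ℝ) :
    nrm (fun j => ∑ l, M l j * v l) ≤ opNorm2 M * nrm v := by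
  set u : Fin q → ℝ := fun j => ∑ l, M l j * v l with hu
  have hMu : nrm (fun l => ∑ j, M l j * u j) ≤ opNorm2 M * nrm u := nrm_mulVec_le M u
  have key : nrm u * nrm u ≤ (opNorm2 M * nrm v) * nrm u := by
    have e1 : nrm u * nrm u = ∑ j, u j ^ 2 := by
      rw [nrm_eq]; exact Real.mul_self_sqrt (by positivity)
    have e2 : ∑ j, u j ^ 2 = ∑ l, v l * ∑ j, M l j * u j := by
      calc ∑ j, u j ^ 2 = ∑ j, (∑ l, M l j * v l) * u j := by
            apply Finset.sum_congr rfl; intro j _; rw [sq]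
        _ = ∑ j, ∑ l, v l * (M l j * u j) := by
            apply Finset.sum_congr rfl; intro j _; rw [Finset.sum_mul]
            apply Finset.sum_congr rfl; intro l _; ring
        _ = ∑ l, v l * ∑ j, M l j * u j := by
            rw [Finset.sum_comm]; apply Finset.sum_congr rfl; intro l _
            rw [Finset.mul_sum]
    have e3 : ∑ l, v l * ∑ j, M l j * u j ≤ nrm v * nrm (fun l => ∑ j, M l j * u j) := by
      have h := Real.sum_mul_le_sqrt_mul_sqrt Finset.univ v (fun l => ∑ j, M l j * u j)
      rw [nrm_eq, nrm_eq]; exact h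
    have e4 : nrm v * nrm (fun l => ∑ j, M l j * u j) ≤ nrm v * (opNorm2 M * nrm u) :=
      mul_le_mul_of_nonneg_left hMu (nrm_nonneg v)
    have e5 : nrm v * (opNorm2 M * nrm u) = (opNorm2 M * nrm v) * nrm u := by ring
    rw [e1, e2]; linarith
  rcases eq_or_lt_of_le (nrm_nonneg u) with h0 | h0
  · rw [← h0]; exact mul_nonneg (opNorm2_nonneg M) (nrm_nonneg v)
  · exact le_of_mul_le_mul_right key h0

lemma nrm_vecMul_le_frob {p q : ℕ} (M : Matrix (Fin p) (Fin q) ℝ) (v : Fin p → ℝ) :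
    nrm (fun j => ∑ l, M l j * v l) ≤ Real.sqrt (∑ l, ∑ j, M l j ^ 2) * nrm v := by
  rw [nrm_eq, nrm_eq, ← Real.sqrt_mul (by positivity)]
  apply Real.sqrt_le_sqrt
  calc ∑ j, (∑ l, M l j * v l) ^ 2
      ≤ ∑ j : Fin q, (∑ l, M l j ^ 2) * (∑ l, v l ^ 2) :=
        Finset.sum_le_sum fun j _ => Finset.sum_mul_sq_le_sq_mul_sq _ _ _
    _ = (∑ l, ∑ j, M l j ^ 2) * ∑ l, v l ^ 2 := by
        rw [← Finset.sum_mul, Finset.sum_comm]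

lemma opNorm2_le_starNorm (n : ℕ → ℕ) (H : ℕ) (W : WeightSpace n H) (i : Fin (H + 1)) :
    opNorm2 (block n H W i) ≤ starNorm n H W := by
  show opNorm2 (block n H W i) ≤ ⨆ i', opNorm2 (block n H W i')
  exact le_ciSup (f := fun i' : Fin (H + 1) => opNorm2 (block n H W i')) (Set.Finite.bddAbove (Set.finite_range _)) i

lemma starNorm_nonneg (n : ℕ → ℕ) (H : ℕ) (W : WeightSpace n H) :
    0 ≤ starNorm n H W :=
  le_trans (opNorm2_nonneg _) (opNorm2_le_starNorm n H W 0)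

lemma frob_le_norm (n : ℕ → ℕ) (H : ℕ) (X : WeightSpace n H) (i : Fin (H + 1)) :
    Real.sqrt (∑ l, ∑ j, X ⟨i, (l, j)⟩ ^ 2) ≤ ‖X‖ := by
  rw [EuclideanSpace.norm_eq]
  apply Real.sqrt_le_sqrt
  have e1 : ∀ i' : Fin (H + 1), (∑ l, ∑ j, X ⟨i', (l, j)⟩ ^ 2)
      = ∑ p : Fin (n (i' : ℕ)) × Fin (n ((i' : ℕ) + 1)), X ⟨i', p⟩ ^ 2 := by
    intro i'; rw [Fintype.sum_prod_type]
  calc ∑ l, ∑ j, X ⟨i, (l, j)⟩ ^ 2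
      ≤ ∑ i' : Fin (H + 1), ∑ p : Fin (n (i' : ℕ)) × Fin (n ((i' : ℕ) + 1)), X ⟨i', p⟩ ^ 2 := by
        rw [e1 i]
        exact Finset.single_le_sum
          (f := fun i' : Fin (H + 1) => ∑ p : Fin (n (i' : ℕ)) × Fin (n ((i' : ℕ) + 1)), X ⟨i', p⟩ ^ 2)
          (fun i' _ => Finset.sum_nonneg fun p _ => sq_nonneg _) (Finset.mem_univ i)
    _ = ∑ idx : WeightIdx n H, ‖X idx‖ ^ 2 := by
        rw [← Finset.univ_sigma_univ, Finset.sum_sigma]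
        simp [Real.norm_eq_abs, sq_abs]

/-- The frozen switch value. -/
noncomputable def sw (n : ℕ → ℕ) (H : ℕ) (W : WeightSpace n H)
    (a : EuclideanSpace ℝ (Fin (n 0))) (k : ℕ) (h : k + 1 ≤ H + 1)
    (j : Fin (n (k + 1))) : ℝ :=
  if 0 < ∑ l : Fin (n k), W ⟨⟨k, h⟩, (l, j)⟩ * netAct n H W a k (Nat.le_of_succ_le h) l
    then (1 : ℝ) else 0

/-- First derivative in `t` of `t ↦ frozenAct … (W + t • X) k`. -/
noncomputable def g1 (n : ℕ → ℕ) (H : ℕ) (W X : WeightSpace n H)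
    (a : EuclideanSpace ℝ (Fin (n 0))) :
    (k : ℕ) → k ≤ H + 1 → ℝ → (Fin (n k) → ℝ)
  | 0, _ => fun _ _ => 0
  | k + 1, h => fun t j =>
      sw n H W a k h j *
        ((∑ l : Fin (n k), X ⟨⟨k, h⟩, (l, j)⟩ *
            frozenAct n H W a (W + t • X) k (Nat.le_of_succ_le h) l) +
         ∑ l : Fin (n k), (W + t • X) ⟨⟨k, h⟩, (l, j)⟩ *
            g1 n H W X a k (Nat.le_of_succ_le h) t l)

/-- Second derivative in `t` of `t ↦ frozenAct … (W + t • X) k`. -/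
noncomputable def g2 (n : ℕ → ℕ) (H : ℕ) (W X : WeightSpace n H)
    (a : EuclideanSpace ℝ (Fin (n 0))) :
    (k : ℕ) → k ≤ H + 1 → ℝ → (Fin (n k) → ℝ)
  | 0, _ => fun _ _ => 0
  | k + 1, h => fun t j =>
      sw n H W a k h j *
        (2 * (∑ l : Fin (n k), X ⟨⟨k, h⟩, (l, j)⟩ *
            g1 n H W X a k (Nat.le_of_succ_le h) t l) +
         ∑ l : Fin (n k), (W + t • X) ⟨⟨k, h⟩, (l, j)⟩ *
            g2 n H W X a k (Nat.le_of_succ_le h) t l)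

lemma coord_hasDerivAt (n : ℕ → ℕ) (H : ℕ) (W X : WeightSpace n H)
    (idx : WeightIdx n H) (t : ℝ) :
    HasDerivAt (fun t : ℝ => (W + t • X) idx) (X idx) t := by
  have h : (fun t : ℝ => (W + t • X) idx) = fun t => W idx + t * X idx := rfl
  rw [h]
  simpa using ((hasDerivAt_id t).mul_const (X idx)).const_add (W idx)

lemma hasDerivAt_frozenAct (n : ℕ → ℕ) (H : ℕ) (W X : WeightSpace n H)
    (a : EuclideanSpace ℝ (Fin (n 0))) :
    ∀ (k : ℕ) (h : k ≤ H + 1) (j : Fin (n k)) (t : ℝ),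
      HasDerivAt (fun t : ℝ => frozenAct n H W a (W + t • X) k h j)
        (g1 n H W X a k h t j) t := by
  intro k
  induction k with
  | zero =>
    intro h j t
    have e : (fun t : ℝ => frozenAct n H W a (W + t • X) 0 h j) = fun _ => a j := rfl
    rw [e]
    have e2 : g1 n H W X a 0 h t j = 0 := rfl
    rw [e2]
    exact hasDerivAt_const t (a j)
  | succ k ih =>
    intro h j t
    have hterm : ∀ l : Fin (n k),
        HasDerivAt (fun t : ℝ => (W + t • X) ⟨⟨k, h⟩, (l, j)⟩ *
            frozenAct n H W a (W + t • X) k (Nat.le_of_succ_le h) l)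
          (X ⟨⟨k, h⟩, (l, j)⟩ * frozenAct n H W a (W + t • X) k (Nat.le_of_succ_le h) l +
            (W + t • X) ⟨⟨k, h⟩, (l, j)⟩ * g1 n H W X a k (Nat.le_of_succ_le h) t l) t :=
      fun l => (coord_hasDerivAt n H W X _ t).mul (ih (Nat.le_of_succ_le h) l t)
    have hsum := (HasDerivAt.fun_sum (fun l (_ : l ∈ Finset.univ) => hterm l)).const_mul
      (sw n H W a k h j)
    have e : (fun t : ℝ => frozenAct n H W a (W + t • X) (k + 1) h j)
        = fun t : ℝ => sw n H W a k h j *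
            ∑ l : Fin (n k), (W + t • X) ⟨⟨k, h⟩, (l, j)⟩ *
              frozenAct n H W a (W + t • X) k (Nat.le_of_succ_le h) l := rfl
    rw [e]
    refine hsum.congr_deriv ?_
    simp only [g1, Finset.sum_add_distrib]

lemma hasDerivAt_g1 (n : ℕ → ℕ) (H : ℕ) (W X : WeightSpace n H)
    (a : EuclideanSpace ℝ (Fin (n 0))) :
    ∀ (k : ℕ) (h : k ≤ H + 1) (j : Fin (n k)) (t : ℝ),
      HasDerivAt (fun t : ℝ => g1 n H W X a k h t j) (g2 n H W X a k h t j) t := by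
  intro k
  induction k with
  | zero =>
    intro h j t
    have e : (fun t : ℝ => g1 n H W X a 0 h t j) = fun _ => (0 : ℝ) := rfl
    rw [e]
    have e2 : g2 n H W X a 0 h t j = 0 := rfl
    rw [e2]
    exact hasDerivAt_const t 0
  | succ k ih =>
    intro h j t
    have hterm1 : ∀ l : Fin (n k),
        HasDerivAt (fun t : ℝ => X ⟨⟨k, h⟩, (l, j)⟩ *
            frozenAct n H W a (W + t • X) k (Nat.le_of_succ_le h) l)
          (X ⟨⟨k, h⟩, (l, j)⟩ * g1 n H W X a k (Nat.le_of_succ_le h) t l) t :=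
      fun l => (hasDerivAt_frozenAct n H W X a k (Nat.le_of_succ_le h) l t).const_mul _
    have hterm2 : ∀ l : Fin (n k),
        HasDerivAt (fun t : ℝ => (W + t • X) ⟨⟨k, h⟩, (l, j)⟩ *
            g1 n H W X a k (Nat.le_of_succ_le h) t l)
          (X ⟨⟨k, h⟩, (l, j)⟩ * g1 n H W X a k (Nat.le_of_succ_le h) t l +
            (W + t • X) ⟨⟨k, h⟩, (l, j)⟩ * g2 n H W X a k (Nat.le_of_succ_le h) t l) t :=
      fun l => (coord_hasDerivAt n H W X _ t).mul (ih (Nat.le_of_succ_le h) l t)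
    have hsum := ((HasDerivAt.fun_sum (fun l (_ : l ∈ Finset.univ) => hterm1 l)).add
      (HasDerivAt.fun_sum (fun l (_ : l ∈ Finset.univ) => hterm2 l))).const_mul
      (sw n H W a k h j)
    have e : (fun t : ℝ => g1 n H W X a (k + 1) h t j)
        = fun t : ℝ => sw n H W a k h j *
            ((∑ l : Fin (n k), X ⟨⟨k, h⟩, (l, j)⟩ *
                frozenAct n H W a (W + t • X) k (Nat.le_of_succ_le h) l) +
             ∑ l : Fin (n k), (W + t • X) ⟨⟨k, h⟩, (l, j)⟩ *
                g1 n H W X a k (Nat.le_of_succ_le h) t l) := rfl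
    rw [e]
    refine hsum.congr_deriv ?_
    simp only [g2, Finset.sum_add_distrib]
    ring

lemma nrm_sw_mul_le (n : ℕ → ℕ) (H : ℕ) (W : WeightSpace n H)
    (a : EuclideanSpace ℝ (Fin (n 0))) (k : ℕ) (h : k + 1 ≤ H + 1)
    (v : Fin (n (k + 1)) → ℝ) :
    nrm (fun j => sw n H W a k h j * v j) ≤ nrm v := by
  apply nrm_le_nrm
  intro j
  unfold sw
  split_ifs <;> simp [sq_nonneg]

lemma nrm_Wblock_le (n : ℕ → ℕ) (H : ℕ) (W : WeightSpace n H) (k : ℕ)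
    (h : k + 1 ≤ H + 1) (v : Fin (n k) → ℝ) :
    nrm (fun j : Fin (n (k + 1)) => ∑ l, W ⟨⟨k, h⟩, (l, j)⟩ * v l)
      ≤ starNorm n H W * nrm v :=
  le_trans (nrm_vecMul_le (block n H W ⟨k, h⟩) v)
    (mul_le_mul_of_nonneg_right (opNorm2_le_starNorm n H W ⟨k, h⟩) (nrm_nonneg v))

lemma nrm_Xblock_le (n : ℕ → ℕ) (H : ℕ) (X : WeightSpace n H) (k : ℕ)
    (h : k + 1 ≤ H + 1) (v : Fin (n k) → ℝ) :
    nrm (fun j : Fin (n (k + 1)) => ∑ l, X ⟨⟨k, h⟩, (l, j)⟩ * v l)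
      ≤ ‖X‖ * nrm v :=
  le_trans (nrm_vecMul_le_frob (block n H X ⟨k, h⟩) v)
    (mul_le_mul_of_nonneg_right (frob_le_norm n H X ⟨k, h⟩) (nrm_nonneg v))

lemma helper1 (s x r : ℝ) (k : ℕ) :
    x * (s ^ k * r) + s * ((k : ℝ) * s ^ (k - 1) * (x * r))
      = ((k : ℝ) + 1) * s ^ k * (x * r) := by
  cases k with
  | zero => push_cast; ring
  | succ m =>
    have e : m + 1 - 1 = m := rfl
    rw [e]; push_cast; ring

lemma helper2 (s x r : ℝ) (k : ℕ) :
    2 * (x * ((k : ℝ) * s ^ (k - 1) * (x * r)))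
      + s * ((k : ℝ) * ((k : ℝ) - 1) * s ^ (k - 2) * (x ^ 2 * r))
      = ((k : ℝ) + 1) * (((k : ℝ) + 1) - 1) * s ^ (k - 1) * (x ^ 2 * r) := by
  match k with
  | 0 => norm_num
  | 1 => norm_num; ring_nf
  | (m + 2) =>
    have e1 : m + 2 - 1 = m + 1 := rfl
    have e2 : m + 2 - 2 = m := rfl
    rw [e1, e2]; push_cast; ring

lemma nrm_frozenAct_le (n : ℕ → ℕ) (H : ℕ) (W : WeightSpace n H)
    (a : EuclideanSpace ℝ (Fin (n 0))) (r : ℝ) (ha : ‖a‖ ≤ r) :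
    ∀ (k : ℕ) (h : k ≤ H + 1),
      nrm (frozenAct n H W a W k h) ≤ starNorm n H W ^ k * r := by
  intro k
  induction k with
  | zero =>
    intro h
    rw [pow_zero, one_mul]
    exact ha
  | succ k ih =>
    intro h
    have e : frozenAct n H W a W (k + 1) h
        = fun j => sw n H W a k h j *
            ∑ l : Fin (n k), W ⟨⟨k, h⟩, (l, j)⟩ *
              frozenAct n H W a W k (Nat.le_of_succ_le h) l := rfl
    rw [e]
    calc nrm (fun j => sw n H W a k h j * ∑ l : Fin (n k), W ⟨⟨k, h⟩, (l, j)⟩ *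
            frozenAct n H W a W k (Nat.le_of_succ_le h) l)
        ≤ nrm (fun j : Fin (n (k + 1)) => ∑ l : Fin (n k), W ⟨⟨k, h⟩, (l, j)⟩ *
            frozenAct n H W a W k (Nat.le_of_succ_le h) l) :=
          nrm_sw_mul_le n H W a k h _
      _ ≤ starNorm n H W * nrm (frozenAct n H W a W k (Nat.le_of_succ_le h)) :=
          nrm_Wblock_le n H W k h _
      _ ≤ starNorm n H W * (starNorm n H W ^ k * r) :=
          mul_le_mul_of_nonneg_left (ih _) (starNorm_nonneg n H W)
      _ = starNorm n H W ^ (k + 1) * r := by rw [pow_succ]; ring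

lemma nrm_g1_le (n : ℕ → ℕ) (H : ℕ) (W X : WeightSpace n H)
    (a : EuclideanSpace ℝ (Fin (n 0))) (r : ℝ) (ha : ‖a‖ ≤ r) :
    ∀ (k : ℕ) (h : k ≤ H + 1),
      nrm (g1 n H W X a k h 0)
        ≤ (k : ℝ) * starNorm n H W ^ (k - 1) * (‖X‖ * r) := by
  have hW0 : W + (0 : ℝ) • X = W := by simp
  intro k
  induction k with
  | zero =>
    intro h
    have e : g1 n H W X a 0 h 0 = fun _ : Fin (n 0) => (0 : ℝ) := rfl
    rw [e, nrm_eq]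
    simp
  | succ k ih =>
    intro h
    set s := starNorm n H W with hs
    have h' := Nat.le_of_succ_le h
    have e : g1 n H W X a (k + 1) h 0
        = fun j => sw n H W a k h j *
            ((∑ l : Fin (n k), X ⟨⟨k, h⟩, (l, j)⟩ * frozenAct n H W a W k h' l) +
             ∑ l : Fin (n k), W ⟨⟨k, h⟩, (l, j)⟩ * g1 n H W X a k h' 0 l) := by
      funext j
      simp only [g1]
      rw [hW0]
    rw [e]
    have hA : nrm (fun j : Fin (n (k + 1)) =>
          ∑ l : Fin (n k), X ⟨⟨k, h⟩, (l, j)⟩ * frozenAct n H W a W k h' l)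
        ≤ ‖X‖ * (s ^ k * r) :=
      le_trans (nrm_Xblock_le n H X k h _)
        (mul_le_mul_of_nonneg_left (nrm_frozenAct_le n H W a r ha k h') (norm_nonneg X))
    have hB : nrm (fun j : Fin (n (k + 1)) =>
          ∑ l : Fin (n k), W ⟨⟨k, h⟩, (l, j)⟩ * g1 n H W X a k h' 0 l)
        ≤ s * ((k : ℝ) * s ^ (k - 1) * (‖X‖ * r)) :=
      le_trans (nrm_Wblock_le n H W k h _)
        (mul_le_mul_of_nonneg_left (ih h') (starNorm_nonneg n H W))
    calc nrm (fun j => sw n H W a k h j *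
            ((∑ l : Fin (n k), X ⟨⟨k, h⟩, (l, j)⟩ * frozenAct n H W a W k h' l) +
             ∑ l : Fin (n k), W ⟨⟨k, h⟩, (l, j)⟩ * g1 n H W X a k h' 0 l))
        ≤ nrm (fun j : Fin (n (k + 1)) =>
            (∑ l : Fin (n k), X ⟨⟨k, h⟩, (l, j)⟩ * frozenAct n H W a W k h' l) +
             ∑ l : Fin (n k), W ⟨⟨k, h⟩, (l, j)⟩ * g1 n H W X a k h' 0 l) :=
          nrm_sw_mul_le n H W a k h _
      _ ≤ nrm (fun j : Fin (n (k + 1)) =>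
            ∑ l : Fin (n k), X ⟨⟨k, h⟩, (l, j)⟩ * frozenAct n H W a W k h' l)
          + nrm (fun j : Fin (n (k + 1)) =>
            ∑ l : Fin (n k), W ⟨⟨k, h⟩, (l, j)⟩ * g1 n H W X a k h' 0 l) :=
          nrm_add_le _ _
      _ ≤ ‖X‖ * (s ^ k * r) + s * ((k : ℝ) * s ^ (k - 1) * (‖X‖ * r)) := add_le_add hA hB
      _ = ((k : ℝ) + 1) * s ^ k * (‖X‖ * r) := helper1 s ‖X‖ r k
      _ = ((k + 1 : ℕ) : ℝ) * s ^ (k + 1 - 1) * (‖X‖ * r) := by push_cast; ring_nf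

lemma nrm_g2_le (n : ℕ → ℕ) (H : ℕ) (W X : WeightSpace n H)
    (a : EuclideanSpace ℝ (Fin (n 0))) (r : ℝ) (ha : ‖a‖ ≤ r) :
    ∀ (k : ℕ) (h : k ≤ H + 1),
      nrm (g2 n H W X a k h 0)
        ≤ (k : ℝ) * ((k : ℝ) - 1) * starNorm n H W ^ (k - 2) * (‖X‖ ^ 2 * r) := by
  have hW0 : W + (0 : ℝ) • X = W := by simp
  intro k
  induction k with
  | zero =>
    intro h
    have e : g2 n H W X a 0 h 0 = fun _ : Fin (n 0) => (0 : ℝ) := rfl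
    rw [e, nrm_eq]
    simp
  | succ k ih =>
    intro h
    set s := starNorm n H W with hs
    have h' := Nat.le_of_succ_le h
    have e : g2 n H W X a (k + 1) h 0
        = fun j => sw n H W a k h j *
            (2 * (∑ l : Fin (n k), X ⟨⟨k, h⟩, (l, j)⟩ * g1 n H W X a k h' 0 l) +
             ∑ l : Fin (n k), W ⟨⟨k, h⟩, (l, j)⟩ * g2 n H W X a k h' 0 l) := by
      funext j
      simp only [g2]
      rw [hW0]
    rw [e]
    have hA : nrm (fun j : Fin (n (k + 1)) =>
          2 * ∑ l : Fin (n k), X ⟨⟨k, h⟩, (l, j)⟩ * g1 n H W X a k h' 0 l)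
        ≤ 2 * (‖X‖ * ((k : ℝ) * s ^ (k - 1) * (‖X‖ * r))) := by
      rw [nrm_const_mul]
      have := le_trans (nrm_Xblock_le n H X k h (g1 n H W X a k h' 0))
        (mul_le_mul_of_nonneg_left (nrm_g1_le n H W X a r ha k h') (norm_nonneg X))
      calc |(2 : ℝ)| * nrm (fun j : Fin (n (k + 1)) =>
              ∑ l : Fin (n k), X ⟨⟨k, h⟩, (l, j)⟩ * g1 n H W X a k h' 0 l)
          = 2 * nrm (fun j : Fin (n (k + 1)) =>
              ∑ l : Fin (n k), X ⟨⟨k, h⟩, (l, j)⟩ * g1 n H W X a k h' 0 l) := by norm_num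
        _ ≤ 2 * (‖X‖ * ((k : ℝ) * s ^ (k - 1) * (‖X‖ * r))) := by linarith
    have hB : nrm (fun j : Fin (n (k + 1)) =>
          ∑ l : Fin (n k), W ⟨⟨k, h⟩, (l, j)⟩ * g2 n H W X a k h' 0 l)
        ≤ s * ((k : ℝ) * ((k : ℝ) - 1) * s ^ (k - 2) * (‖X‖ ^ 2 * r)) :=
      le_trans (nrm_Wblock_le n H W k h _)
        (mul_le_mul_of_nonneg_left (ih h') (starNorm_nonneg n H W))
    calc nrm (fun j => sw n H W a k h j *
            (2 * (∑ l : Fin (n k), X ⟨⟨k, h⟩, (l, j)⟩ * g1 n H W X a k h' 0 l) +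
             ∑ l : Fin (n k), W ⟨⟨k, h⟩, (l, j)⟩ * g2 n H W X a k h' 0 l))
        ≤ nrm (fun j : Fin (n (k + 1)) =>
            2 * (∑ l : Fin (n k), X ⟨⟨k, h⟩, (l, j)⟩ * g1 n H W X a k h' 0 l) +
             ∑ l : Fin (n k), W ⟨⟨k, h⟩, (l, j)⟩ * g2 n H W X a k h' 0 l) :=
          nrm_sw_mul_le n H W a k h _
      _ ≤ nrm (fun j : Fin (n (k + 1)) =>
            2 * ∑ l : Fin (n k), X ⟨⟨k, h⟩, (l, j)⟩ * g1 n H W X a k h' 0 l)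
          + nrm (fun j : Fin (n (k + 1)) =>
            ∑ l : Fin (n k), W ⟨⟨k, h⟩, (l, j)⟩ * g2 n H W X a k h' 0 l) :=
          nrm_add_le _ _
      _ ≤ 2 * (‖X‖ * ((k : ℝ) * s ^ (k - 1) * (‖X‖ * r)))
          + s * ((k : ℝ) * ((k : ℝ) - 1) * s ^ (k - 2) * (‖X‖ ^ 2 * r)) := add_le_add hA hB
      _ = ((k : ℝ) + 1) * (((k : ℝ) + 1) - 1) * s ^ (k - 1) * (‖X‖ ^ 2 * r) :=
          helper2 s ‖X‖ r k
      _ = ((k + 1 : ℕ) : ℝ) * (((k + 1 : ℕ) : ℝ) - 1) * s ^ (k + 1 - 2) * (‖X‖ ^ 2 * r) := by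
          have e2 : k + 1 - 2 = k - 1 := by omega
          rw [e2]; push_cast; ring_nf

/-- if `‖aᵢ‖₂ ≤ r` for all `i`, then for every direction `X`, the second
derivative of the frozen-switch loss `ϕ` along the line through `W` in direction `X`
satisfies `(d²/dt²)|₀ ϕ(W+tX) ≥ −√2·H(H+1)·‖W‖_*^{H−1}·‖X‖²·r·ϕ(W)^{1/2}`. -/
theorem frozen_loss_second_derivative_bound (n : ℕ → ℕ) (H : ℕ)
    (hout : n (H + 1) = 1) (hwidth : ∀ i, 1 ≤ i → i ≤ H → 1 < n i)
    (N : ℕ) (a : Fin N → EuclideanSpace ℝ (Fin (n 0)))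
    (f : EuclideanSpace ℝ (Fin (n 0)) → ℝ)
    (r : ℝ) (hnorm : ∀ i, ‖a i‖ ≤ r)
    (W X : WeightSpace n H) :
    deriv (deriv fun t : ℝ => frozenLoss n H N hout a f W (W + t • X)) 0 ≥
      -(Real.sqrt 2 * ((H : ℝ) * ((H : ℝ) + 1)) * starNorm n H W ^ (H - 1) *
        ‖X‖ ^ 2 * r * Real.sqrt (frozenLoss n H N hout a f W W)) := by
  rcases Nat.eq_zero_or_pos N with hN | hN
  · subst hN
    have hzero : (fun t : ℝ => frozenLoss n H 0 hout a f W (W + t • X)) = fun _ => (0 : ℝ) := by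
      funext t; simp [frozenLoss]
    have hzero2 : frozenLoss n H 0 hout a f W W = 0 := by simp [frozenLoss]
    rw [hzero, hzero2]
    simp
  -- main case
  set s := starNorm n H W with hs
  have hs0 : 0 ≤ s := starNorm_nonneg n H W
  have hr : 0 ≤ r := le_trans (norm_nonneg (a ⟨0, hN⟩)) (hnorm ⟨0, hN⟩)
  set c : ℝ := 1 / (2 * (N : ℝ)) with hc
  have hc0 : 0 ≤ c := by rw [hc]; positivity
  set j0 : Fin (n (H + 1)) := ⟨0, by omega⟩ with hj0
  set P : Fin N → ℝ → ℝ :=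
    fun i t => frozenAct n H W (a i) (W + t • X) (H + 1) le_rfl j0 with hP
  set Q : Fin N → ℝ → ℝ := fun i t => g1 n H W X (a i) (H + 1) le_rfl t j0 with hQ
  set R : Fin N → ℝ → ℝ := fun i t => g2 n H W X (a i) (H + 1) le_rfl t j0 with hR
  set D1 : ℝ → ℝ := fun t => c * ∑ i, (-2 : ℝ) * ((f (a i) - P i t) * Q i t) with hD1
  -- first derivative
  have hphi : ∀ t : ℝ, HasDerivAt (fun u : ℝ => frozenLoss n H N hout a f W (W + u • X))
      (D1 t) t := by
    intro t
    have hterm : ∀ i : Fin N, HasDerivAt (fun u : ℝ => (f (a i) - P i u) ^ 2)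
        ((-2 : ℝ) * ((f (a i) - P i t) * Q i t)) t := by
      intro i
      have h1 : HasDerivAt (fun u : ℝ => f (a i) - P i u) (0 - Q i t) t :=
        (hasDerivAt_const t (f (a i))).sub
          (hasDerivAt_frozenAct n H W X (a i) (H + 1) le_rfl j0 t)
      have h2 := h1.pow 2
      refine h2.congr_deriv ?_
      push_cast
      ring
    have hsum := (HasDerivAt.fun_sum fun i (_ : i ∈ Finset.univ) => hterm i).const_mul c
    have hfun : (fun u : ℝ => frozenLoss n H N hout a f W (W + u • X))
        = fun u : ℝ => c * ∑ i, (f (a i) - P i u) ^ 2 := rfl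
    rw [hfun]
    exact hsum
  -- second derivative
  have hphi1 : HasDerivAt D1
      (c * ∑ i, (-2 : ℝ) * ((0 - Q i 0) * Q i 0 + (f (a i) - P i 0) * R i 0)) 0 := by
    have hterm : ∀ i : Fin N,
        HasDerivAt (fun t : ℝ => (-2 : ℝ) * ((f (a i) - P i t) * Q i t))
          ((-2 : ℝ) * ((0 - Q i 0) * Q i 0 + (f (a i) - P i 0) * R i 0)) 0 := fun i =>
      (((hasDerivAt_const 0 (f (a i))).sub
          (hasDerivAt_frozenAct n H W X (a i) (H + 1) le_rfl j0 0)).mul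
        (hasDerivAt_g1 n H W X (a i) (H + 1) le_rfl j0 0)).const_mul (-2)
    exact (HasDerivAt.fun_sum fun i (_ : i ∈ Finset.univ) => hterm i).const_mul c
  have hDD : deriv (deriv fun t : ℝ => frozenLoss n H N hout a f W (W + t • X)) 0
      = c * ∑ i, (-2 : ℝ) * ((0 - Q i 0) * Q i 0 + (f (a i) - P i 0) * R i 0) := by
    have h1 : (deriv fun t : ℝ => frozenLoss n H N hout a f W (W + t • X)) = D1 :=
      funext fun t => (hphi t).deriv
    rw [h1, hphi1.deriv]
  rw [hDD]
  -- the errors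
  set e : Fin N → ℝ := fun i => f (a i) - frozenOut n H hout W (a i) W with he
  have hW0 : W + (0 : ℝ) • X = W := by simp
  have hPe : ∀ i, f (a i) - P i 0 = e i := by
    intro i
    simp only [hP, he]
    rw [hW0]
    rfl
  simp only [hPe]
  set T : ℝ := ∑ i, e i ^ 2 with hT
  have hT0 : 0 ≤ T := by rw [hT]; positivity
  set Bd : ℝ := ((H : ℝ) + 1) * (H : ℝ) * s ^ (H - 1) * (‖X‖ ^ 2 * r) with hBddef
  have hBd : ∀ i, |R i 0| ≤ Bd := by
    intro i
    have h2 := nrm_g2_le n H W X (a i) r (hnorm i) (H + 1) le_rfl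
    have h3 : ((H + 1 : ℕ) : ℝ) * (((H + 1 : ℕ) : ℝ) - 1) * s ^ (H + 1 - 2) * (‖X‖ ^ 2 * r)
        = Bd := by
      have e2 : H + 1 - 2 = H - 1 := by omega
      rw [hBddef, e2]
      push_cast
      ring
    rw [hR]
    calc |g2 n H W X (a i) (H + 1) le_rfl 0 j0|
        ≤ nrm (g2 n H W X (a i) (H + 1) le_rfl 0) := abs_le_nrm _ j0
      _ ≤ ((H + 1 : ℕ) : ℝ) * (((H + 1 : ℕ) : ℝ) - 1) * s ^ (H + 1 - 2) * (‖X‖ ^ 2 * r) := h2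
      _ = Bd := h3
  have hBd0 : 0 ≤ Bd := by
    rw [hBddef]
    have h4 : (0 : ℝ) ≤ ((H : ℝ) + 1) * (H : ℝ) := by positivity
    have h5 : (0 : ℝ) ≤ s ^ (H - 1) := pow_nonneg hs0 _
    have h6 : (0 : ℝ) ≤ ‖X‖ ^ 2 * r := by positivity
    exact mul_nonneg (mul_nonneg h4 h5) h6
  have hQR : ∀ i, (-2 : ℝ) * (|e i| * Bd)
      ≤ (-2 : ℝ) * ((0 - Q i 0) * Q i 0 + e i * R i 0) := by
    intro i
    have h2 : e i * R i 0 ≤ |e i| * Bd :=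
      le_trans (le_abs_self _)
        (by rw [abs_mul]; exact mul_le_mul_of_nonneg_left (hBd i) (abs_nonneg _))
    nlinarith [sq_nonneg (Q i 0)]
  have hsum1 : c * ∑ i, (-2 : ℝ) * (|e i| * Bd)
      ≤ c * ∑ i, (-2 : ℝ) * ((0 - Q i 0) * Q i 0 + e i * R i 0) :=
    mul_le_mul_of_nonneg_left (Finset.sum_le_sum fun i _ => hQR i) hc0
  have habs : ∑ i, |e i| ≤ Real.sqrt N * Real.sqrt T := by
    have h1 : (∑ i, |e i|) ^ 2 ≤ (N : ℝ) * T := by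
      have h0 := sq_sum_le_card_mul_sum_sq (s := Finset.univ) (f := fun i => |e i|)
      simpa [sq_abs, hT] using h0
    calc ∑ i, |e i| = Real.sqrt ((∑ i, |e i|) ^ 2) :=
          (Real.sqrt_sq (Finset.sum_nonneg fun i _ => abs_nonneg _)).symm
      _ ≤ Real.sqrt ((N : ℝ) * T) := Real.sqrt_le_sqrt h1
      _ = Real.sqrt N * Real.sqrt T := Real.sqrt_mul (by positivity) T
  have heq2 : c * ∑ i, (-2 : ℝ) * (|e i| * Bd) = -(2 * c * Bd * ∑ i, |e i|) := by
    have h1 : ∀ i : Fin N, (-2 : ℝ) * (|e i| * Bd) = |e i| * (-(2 * Bd)) := fun i => by ring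
    rw [Finset.sum_congr rfl fun i _ => h1 i, ← Finset.sum_mul]
    ring
  have hLoss : frozenLoss n H N hout a f W W = c * T := rfl
  rw [hLoss]
  -- final arithmetic
  have hN0 : (0 : ℝ) < (N : ℝ) := by exact_mod_cast hN
  have hsN : Real.sqrt N * Real.sqrt N = (N : ℝ) := Real.mul_self_sqrt (le_of_lt hN0)
  have hsNne : Real.sqrt N ≠ 0 := by positivity
  have h2ne : Real.sqrt 2 ≠ 0 := by positivity
  have hsqrtc : Real.sqrt c = 1 / (Real.sqrt 2 * Real.sqrt N) := by
    rw [hc, one_div, Real.sqrt_inv, Real.sqrt_mul (by norm_num : (0:ℝ) ≤ 2), one_div]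
  have hsqrtCT : Real.sqrt (c * T) = Real.sqrt c * Real.sqrt T := Real.sqrt_mul hc0 T
  have hfinal : 2 * c * Bd * (Real.sqrt N * Real.sqrt T)
      = Real.sqrt 2 * ((H : ℝ) * ((H : ℝ) + 1)) * s ^ (H - 1) * ‖X‖ ^ 2 * r
        * Real.sqrt (c * T) := by
    rw [hsqrtCT, hsqrtc, hBddef, hc]
    field_simp
    linear_combination (2 * (((H:ℝ) + 1) * (H:ℝ) * s ^ (H - 1) * (‖X‖ ^ 2 * r)) *
      Real.sqrt T * Real.sqrt 2 + (H:ℝ) * s ^ (H - 1) * ‖X‖ ^ 2 * r * Real.sqrt T *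
      (1 - 2 * Real.sqrt 2 - 2 * (H:ℝ) * Real.sqrt 2)) * hsN
  have hmono : 2 * c * Bd * (∑ i, |e i|) ≤ 2 * c * Bd * (Real.sqrt N * Real.sqrt T) :=
    mul_le_mul_of_nonneg_left habs (by positivity)
  calc c * ∑ i, (-2 : ℝ) * ((0 - Q i 0) * Q i 0 + e i * R i 0)
      ≥ c * ∑ i, (-2 : ℝ) * (|e i| * Bd) := hsum1
    _ = -(2 * c * Bd * ∑ i, |e i|) := heq2
    _ ≥ -(2 * c * Bd * (Real.sqrt N * Real.sqrt T)) := neg_le_neg hmono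
    _ = -(Real.sqrt 2 * ((H : ℝ) * ((H : ℝ) + 1)) * s ^ (H - 1) * ‖X‖ ^ 2 * r
        * Real.sqrt (c * T)) := by rw [hfinal]
end

section
/- Piecewise strong convexity: there exist finitely many closed sets B₁,…,B_L ⊆ ℝ^m with U(λ,θ) = ⋃_{i=1}^L (B_i ∩ U(λ,θ)), open sets V_i ⊇ B_i ∩ U(λ,θ), and smooth functions ϕ_i : V_i → ℝ such that (i) the Hessian of ϕ_i satisfies H(ϕ_i)(W) ⪰ θ·I_m (as symmetric matrices) for all W ∈ V_i, and (ii) ℓ_λ = ϕ_i on B_i ∩ U(λ,θ) for every i. -/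
open scoped BigOperators

namespace PSC

variable (n : ℕ → ℕ) (H : ℕ)

/-- A ReLU switch pattern for one data point. -/
abbrev Pat : Type := (k : Fin (H + 1)) → Fin (n (k + 1)) → Bool

/-- Frozen (gated) activations. -/
def frozAct (ε : Pat n H) (W : WeightSpace n H)
    (a : EuclideanSpace ℝ (Fin (n 0))) : (k : ℕ) → k ≤ H + 1 → (Fin (n k) → ℝ)
  | 0, _ => a
  | k + 1, h => fun j =>
      if ε ⟨k, h⟩ j then
        ∑ l : Fin (n k), W ⟨⟨k, h⟩, (l, j)⟩ * frozAct ε W a k (Nat.le_of_succ_le h) l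
      else 0

/-- The closed region where the frozen net agrees with the true net. -/
def Bpat (ε : Pat n H) (a : EuclideanSpace ℝ (Fin (n 0))) : Set (WeightSpace n H) :=
  {W | ∀ (k : ℕ) (h : k + 1 ≤ H + 1) (j : Fin (n (k + 1))),
    if ε ⟨k, h⟩ j then
      0 ≤ ∑ l : Fin (n k), W ⟨⟨k, h⟩, (l, j)⟩ * frozAct n H ε W a k (Nat.le_of_succ_le h) l
    else
      (∑ l : Fin (n k), W ⟨⟨k, h⟩, (l, j)⟩ * frozAct n H ε W a k (Nat.le_of_succ_le h) l) ≤ 0}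

lemma frozAct_eq_netAct (ε : Pat n H) (W : WeightSpace n H)
    (a : EuclideanSpace ℝ (Fin (n 0))) (hB : W ∈ Bpat n H ε a) :
    ∀ (k : ℕ) (h : k ≤ H + 1), frozAct n H ε W a k h = netAct n H W a k h := by
  intro k
  induction k with
  | zero => intro h; rfl
  | succ k ih =>
    intro h
    funext j
    have hc := hB k h j
    simp only [ih (Nat.le_of_succ_le h)] at hc
    simp only [frozAct, netAct, ih (Nat.le_of_succ_le h)]
    by_cases hε : ε ⟨k, h⟩ j
    · simp only [if_pos hε] at hc ⊢
      exact (max_eq_left hc).symm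
    · simp only [if_neg hε] at hc ⊢
      exact (max_eq_right hc).symm

/-- Every weight vector belongs to some pattern region. -/
lemma exists_pat_mem (W : WeightSpace n H) (a : EuclideanSpace ℝ (Fin (n 0))) :
    ∃ ε : Pat n H, W ∈ Bpat n H ε a := by
  classical
  refine ⟨fun k j => decide (0 ≤ ∑ l : Fin (n k),
      W ⟨⟨k, k.isLt⟩, (l, j)⟩ * netAct n H W a k (Nat.le_of_lt k.isLt) l), ?_⟩
  set ε : Pat n H := fun k j => decide (0 ≤ ∑ l : Fin (n k),
      W ⟨⟨k, k.isLt⟩, (l, j)⟩ * netAct n H W a k (Nat.le_of_lt k.isLt) l) with hε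
  have key : ∀ (k : ℕ) (h : k ≤ H + 1), frozAct n H ε W a k h = netAct n H W a k h := by
    intro k
    induction k with
    | zero => intro h; rfl
    | succ k ih =>
      intro h
      funext j
      simp only [frozAct, netAct, ih (Nat.le_of_succ_le h)]
      by_cases h0 : 0 ≤ ∑ l : Fin (n k), W ⟨⟨k, h⟩, (l, j)⟩ * netAct n H W a k (Nat.le_of_succ_le h) l
      · have hT : ε ⟨k, h⟩ j = true := decide_eq_true h0
        simp only [if_pos hT]
        exact (max_eq_left h0).symm
      · have hT : ε ⟨k, h⟩ j = false := decide_eq_false h0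
        simp only [hT, if_false]
        exact (max_eq_right (le_of_not_ge h0)).symm
  intro k h j
  simp only [key k (Nat.le_of_succ_le h)]
  by_cases h0 : 0 ≤ ∑ l : Fin (n k), W ⟨⟨k, h⟩, (l, j)⟩ * netAct n H W a k (Nat.le_of_succ_le h) l
  · have hT : ε ⟨k, h⟩ j = true := decide_eq_true h0
    simp only [if_pos hT]; exact h0
  · have hT : ε ⟨k, h⟩ j = false := decide_eq_false h0
    simp only [hT, if_false]; exact le_of_not_ge h0



lemma contDiff_frozAct (ε : Pat n H) (a : EuclideanSpace ℝ (Fin (n 0))) :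
    ∀ (k : ℕ) (h : k ≤ H + 1) (j : Fin (n k)),
      ContDiff ℝ (⊤ : ℕ∞) (fun W : WeightSpace n H => frozAct n H ε W a k h j) := by
  intro k
  induction k with
  | zero => intro h j; exact contDiff_const
  | succ k ih =>
    intro h j
    by_cases hε : ε ⟨k, h⟩ j
    · have : (fun W : WeightSpace n H => frozAct n H ε W a (k+1) h j) =
        fun W => ∑ l : Fin (n k), W ⟨⟨k, h⟩, (l, j)⟩ * frozAct n H ε W a k (Nat.le_of_succ_le h) l := by
        funext W; simp only [frozAct, if_pos hε]
      rw [this]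
      exact ContDiff.sum fun l _ =>
        ((EuclideanSpace.proj (⟨⟨k, h⟩, (l, j)⟩ : WeightIdx n H)).contDiff).mul
          (ih (Nat.le_of_succ_le h) l)
    · have : (fun W : WeightSpace n H => frozAct n H ε W a (k+1) h j) = fun _ => 0 := by
        funext W; simp only [frozAct, if_neg hε]
      rw [this]; exact contDiff_const

lemma isClosed_Bpat (ε : Pat n H) (a : EuclideanSpace ℝ (Fin (n 0))) :
    IsClosed (Bpat n H ε a) := by
  have : Bpat n H ε a = ⋂ (k : Fin (H + 1)), ⋂ (j : Fin (n (k + 1))),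
      {W : WeightSpace n H | if ε ⟨k, k.isLt⟩ j then
        0 ≤ ∑ l : Fin (n k), W ⟨⟨k, k.isLt⟩, (l, j)⟩ * frozAct n H ε W a k (Nat.le_of_lt k.isLt) l
      else (∑ l : Fin (n k), W ⟨⟨k, k.isLt⟩, (l, j)⟩ * frozAct n H ε W a k (Nat.le_of_lt k.isLt) l) ≤ 0} := by
    ext W
    constructor
    · intro hW
      refine Set.mem_iInter.2 fun k => Set.mem_iInter.2 fun j => ?_
      exact hW k k.isLt j
    · intro hW k h j
      have := Set.mem_iInter.1 (Set.mem_iInter.1 hW ⟨k, h⟩) j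
      exact this
  rw [this]
  refine isClosed_iInter fun k => isClosed_iInter fun j => ?_
  have hcont : Continuous (fun W : WeightSpace n H =>
      ∑ l : Fin (n k), W ⟨⟨k, k.isLt⟩, (l, j)⟩ * frozAct n H ε W a k (Nat.le_of_lt k.isLt) l) := by
    refine continuous_finset_sum _ fun l _ => ?_
    exact ((EuclideanSpace.proj _).continuous).mul
      (contDiff_frozAct n H ε a k (Nat.le_of_lt k.isLt) l).continuous
  by_cases hε : ε ⟨k, k.isLt⟩ j
  · simp only [if_pos hε]; exact isClosed_le continuous_const hcont
  · simp only [if_neg hε]; exact isClosed_le hcont continuous_const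

section

variable (N : ℕ) (hout : n (H + 1) = 1) (a : Fin N → EuclideanSpace ℝ (Fin (n 0)))
  (f : EuclideanSpace ℝ (Fin (n 0)) → ℝ) (lam : ℝ)

def out0 : Fin (n (H + 1)) := ⟨0, by omega⟩

noncomputable def frozOut (ε : Pat n H) (W : WeightSpace n H)
    (a : EuclideanSpace ℝ (Fin (n 0))) : ℝ :=
  frozAct n H ε W a (H + 1) le_rfl (out0 n H hout)

noncomputable def frozLoss (ε : Fin N → Pat n H) (W : WeightSpace n H) : ℝ :=
  (1 / (2 * (N : ℝ))) * ∑ i, (f (a i) - frozOut n H hout (ε i) W (a i)) ^ 2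

noncomputable def phi (ε : Fin N → Pat n H) (W : WeightSpace n H) : ℝ :=
  frozLoss n H N hout a f ε W + lam / 2 * ‖W‖ ^ 2

def BsetN (ε : Fin N → Pat n H) : Set (WeightSpace n H) :=
  ⋂ i, Bpat n H (ε i) (a i)

lemma isClosed_BsetN (ε : Fin N → Pat n H) : IsClosed (BsetN n H N a ε) :=
  isClosed_iInter fun i => isClosed_Bpat n H (ε i) (a i)

lemma frozOut_eq_netOut (ε : Fin N → Pat n H) (W : WeightSpace n H)
    (hW : W ∈ BsetN n H N a ε) (i : Fin N) :
    frozOut n H hout (ε i) W (a i) = netOut n H hout W (a i) :=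
  congrFun (frozAct_eq_netAct n H (ε i) W (a i) (Set.mem_iInter.1 hW i) (H + 1) le_rfl) _

lemma frozLoss_eq_loss (ε : Fin N → Pat n H) (W : WeightSpace n H)
    (hW : W ∈ BsetN n H N a ε) :
    frozLoss n H N hout a f ε W = loss n H N hout a f W := by
  unfold frozLoss loss
  congr 1
  exact Finset.sum_congr rfl fun i _ => by
    rw [frozOut_eq_netOut n H N hout a ε W hW i]

lemma contDiff_frozLoss (ε : Fin N → Pat n H) :
    ContDiff ℝ (⊤ : ℕ∞) (frozLoss n H N hout a f ε) := by
  unfold frozLoss frozOut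
  refine ContDiff.mul contDiff_const (ContDiff.sum fun i _ => ?_)
  exact (contDiff_const.sub (contDiff_frozAct n H (ε i) (a i) (H + 1) le_rfl _)).pow 2

lemma contDiff_phi (ε : Fin N → Pat n H) :
    ContDiff ℝ (⊤ : ℕ∞) (phi n H N hout a f lam ε) := by
  unfold phi
  exact (contDiff_frozLoss n H N hout a f ε).add (contDiff_const.mul (contDiff_norm_sq ℝ))

lemma continuous_opNorm2_block (i : Fin (H + 1)) :
    Continuous (fun W : WeightSpace n H => opNorm2 (block n H W i)) := by
  let T : WeightSpace n H →ₗ[ℝ]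
      (EuclideanSpace ℝ (Fin (n (i + 1))) →L[ℝ] EuclideanSpace ℝ (Fin (n i))) :=
    { toFun := fun W => LinearMap.toContinuousLinearMap (Matrix.toEuclideanLin (block n H W i))
      map_add' := by
        intro W1 W2
        have hb : block n H (W1 + W2) i = block n H W1 i + block n H W2 i := by
          ext j k; simp [block, PiLp.add_apply]
        simp [hb, map_add]
      map_smul' := by
        intro c W
        have hb : block n H (c • W) i = c • block n H W i := by
          ext j k; simp [block, PiLp.smul_apply]
        simp [hb, map_smul] }
  have hT : Continuous T := T.continuous_of_finiteDimensional
  exact continuous_norm.comp hT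

lemma continuous_starNorm : Continuous (starNorm n H) := by
  have hrw : starNorm n H = fun W => Finset.univ.sup' Finset.univ_nonempty
      (fun i : Fin (H + 1) => opNorm2 (block n H W i)) := by
    funext W
    rw [Finset.sup'_univ_eq_ciSup]
    rfl
  rw [hrw]
  exact Continuous.finset_sup'_apply Finset.univ_nonempty
    fun i _ => continuous_opNorm2_block n H i

lemma opNorm2_nonneg {p q : ℕ} (M : Matrix (Fin p) (Fin q) ℝ) : 0 ≤ opNorm2 M :=
  norm_nonneg _

lemma opNorm2_block_le_starNorm (W : WeightSpace n H) (i : Fin (H + 1)) :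
    opNorm2 (block n H W i) ≤ starNorm n H W :=
  le_ciSup (f := fun i => opNorm2 (block n H W i)) (Set.Finite.bddAbove (Set.finite_range _)) i

lemma starNorm_nonneg (W : WeightSpace n H) : 0 ≤ starNorm n H W :=
  le_trans (opNorm2_nonneg _) (opNorm2_block_le_starNorm n H W 0)

noncomputable def VsetN (θ r : ℝ) (ε : Fin N → Pat n H) : Set (WeightSpace n H) :=
  {W | Real.sqrt (frozLoss n H N hout a f ε W) * starNorm n H W ^ (H - 1) <
    (lam - θ) / (Real.sqrt 2 * ((H : ℝ) * ((H : ℝ) + 1)) * r)}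

lemma isOpen_VsetN (θ r : ℝ) (ε : Fin N → Pat n H) :
    IsOpen (VsetN n H N hout a f lam θ r ε) := by
  refine isOpen_lt ?_ continuous_const
  exact ((Real.continuous_sqrt.comp (contDiff_frozLoss n H N hout a f ε).continuous).mul
    ((continuous_starNorm n H).pow _))

lemma BU_subset_VsetN (θ r : ℝ) (ε : Fin N → Pat n H) :
    BsetN n H N a ε ∩ Uset n H N hout a f lam θ r ⊆ VsetN n H N hout a f lam θ r ε := by
  intro W hW
  have := hW.2
  simp only [Uset, Set.mem_setOf_eq] at this
  simp only [VsetN, Set.mem_setOf_eq]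
  rwa [frozLoss_eq_loss n H N hout a f ε W hW.1]

end


/-! ### Euclidean norm on plain functions -/

noncomputable def en {q : ℕ} (x : Fin q → ℝ) : ℝ :=
  ‖(WithLp.equiv 2 (Fin q → ℝ)).symm x‖

lemma en_nonneg {q : ℕ} (x : Fin q → ℝ) : 0 ≤ en x := norm_nonneg _

lemma en_eq_sqrt {q : ℕ} (x : Fin q → ℝ) : en x = Real.sqrt (∑ j, x j ^ 2) := by
  rw [en, EuclideanSpace.norm_eq]
  congr 1
  exact Finset.sum_congr rfl fun j _ => by
    rw [show ((WithLp.equiv 2 (Fin q → ℝ)).symm x).ofLp j = x j from rfl, Real.norm_eq_abs, sq_abs]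

lemma abs_le_en {q : ℕ} (x : Fin q → ℝ) (j : Fin q) : |x j| ≤ en x := by
  rw [en_eq_sqrt, ← Real.sqrt_sq_eq_abs]
  exact Real.sqrt_le_sqrt (Finset.single_le_sum (f := fun j => x j ^ 2)
    (fun i _ => sq_nonneg _) (Finset.mem_univ j))

lemma en_add_le {q : ℕ} (x y : Fin q → ℝ) : en (fun j => x j + y j) ≤ en x + en y := by
  have : (fun j => x j + y j) = x + y := rfl
  rw [en, this]
  exact norm_add_le ((WithLp.equiv 2 (Fin q → ℝ)).symm x) ((WithLp.equiv 2 (Fin q → ℝ)).symm y)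

lemma en_gate_le {q : ℕ} (b : Fin q → Bool) (x : Fin q → ℝ) :
    en (fun j => if b j then x j else 0) ≤ en x := by
  rw [en_eq_sqrt, en_eq_sqrt]
  refine Real.sqrt_le_sqrt (Finset.sum_le_sum fun j _ => ?_)
  by_cases hb : b j
  · rw [if_pos hb]
  · rw [if_neg hb]; simpa using sq_nonneg (x j)

lemma en_smul_le {q : ℕ} (c : ℝ) (x : Fin q → ℝ) : en (fun j => c * x j) = |c| * en x := by
  rw [en_eq_sqrt, en_eq_sqrt]
  rw [← Real.sqrt_sq_eq_abs, ← Real.sqrt_mul (sq_nonneg c), Finset.mul_sum]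
  congr 1
  exact Finset.sum_congr rfl fun j _ => by ring

/-- Operator norm bound for multiplication by the transpose of a matrix. -/
lemma en_transpose_mul_le {p q : ℕ} (M : Matrix (Fin p) (Fin q) ℝ) (u : Fin p → ℝ) :
    en (fun j => ∑ l, M l j * u l) ≤ opNorm2 M * en u := by
  classical
  set T := LinearMap.toContinuousLinearMap (Matrix.toEuclideanLin M) with hT
  set w : EuclideanSpace ℝ (Fin q) := (WithLp.equiv 2 (Fin q → ℝ)).symm (fun j => ∑ l, M l j * u l) with hw
  set u' : EuclideanSpace ℝ (Fin p) := (WithLp.equiv 2 (Fin p → ℝ)).symm u with hu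
  have hwj : ∀ j, w j = ∑ l, M l j * u l := fun j => rfl
  have huj : ∀ l, u' l = u l := fun l => rfl
  have hTw : ∀ l, T w l = ∑ j, M l j * w j := by
    intro l
    rw [hT]
    rw [LinearMap.coe_toContinuousLinearMap']
    rw [Matrix.toEuclideanLin_apply]
    rfl
  have key : (‖w‖ : ℝ) ^ 2 = inner ℝ u' (T w) := by
    rw [← real_inner_self_eq_norm_sq]
    rw [PiLp.inner_apply, PiLp.inner_apply]
    simp only [RCLike.inner_apply, starRingEnd_apply, star_trivial]
    rw [show ∑ x, (T w) x * u' x = ∑ l, u' l * T w l from Finset.sum_congr rfl fun l _ => mul_comm _ _]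
    calc ∑ j, w j * w j = ∑ j, (∑ l, M l j * u l) * w j := by
          exact Finset.sum_congr rfl fun j _ => by rw [hwj]
      _ = ∑ j, ∑ l, u l * (M l j * w j) := by
          exact Finset.sum_congr rfl fun j _ => by rw [Finset.sum_mul]; exact Finset.sum_congr rfl fun l _ => by ring
      _ = ∑ l, ∑ j, u l * (M l j * w j) := Finset.sum_comm
      _ = ∑ l, u' l * T w l := by
          exact Finset.sum_congr rfl fun l _ => by rw [hTw, huj, Finset.mul_sum]
  have h1 : (‖w‖ : ℝ) ^ 2 ≤ ‖u'‖ * (‖T‖ * ‖w‖) := by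
    rw [key]
    exact le_trans (real_inner_le_norm u' (T w)) (by
      have := T.le_opNorm w
      exact mul_le_mul_of_nonneg_left this (norm_nonneg u'))
  have hen : en (fun j => ∑ l, M l j * u l) = ‖w‖ := rfl
  have henu : en u = ‖u'‖ := rfl
  rw [hen, henu, show opNorm2 M = ‖T‖ from rfl]
  rcases eq_or_lt_of_le (norm_nonneg w) with h0 | h0
  · rw [← h0]
    positivity
  · have := h1
    rw [pow_two] at this
    have h2 : ‖w‖ * ‖w‖ ≤ (‖T‖ * ‖u'‖) * ‖w‖ := by nlinarith [norm_nonneg u', norm_nonneg (T w)]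
    exact le_of_mul_le_mul_right (by linarith) h0


lemma sum_block_sq_le (X : WeightSpace n H) (i : Fin (H + 1)) :
    ∑ l : Fin (n i), ∑ j : Fin (n (i + 1)), X ⟨i, (l, j)⟩ ^ 2 ≤ ‖X‖ ^ 2 := by
  have hnorm : ‖X‖ ^ 2 = ∑ idx : WeightIdx n H, X idx ^ 2 := by
    rw [EuclideanSpace.norm_eq, Real.sq_sqrt (by positivity)]
    exact Finset.sum_congr rfl fun idx _ => by rw [Real.norm_eq_abs, sq_abs]
  rw [hnorm, ← Finset.univ_sigma_univ, Finset.sum_sigma]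
  have h1 : ∑ p : Fin (n i) × Fin (n (i + 1)), X ⟨i, p⟩ ^ 2 ≤
      ∑ i' : Fin (H + 1), ∑ p : Fin (n i') × Fin (n (i' + 1)), X ⟨i', p⟩ ^ 2 :=
    Finset.single_le_sum (f := fun i' : Fin (H + 1) =>
      ∑ p : Fin (n i') × Fin (n (i' + 1)), X ⟨i', p⟩ ^ 2)
      (fun _ _ => Finset.sum_nonneg fun _ _ => sq_nonneg _) (Finset.mem_univ i)
  calc ∑ l : Fin (n i), ∑ j : Fin (n (i + 1)), X ⟨i, (l, j)⟩ ^ 2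
      = ∑ p : Fin (n i) × Fin (n (i + 1)), X ⟨i, p⟩ ^ 2 := by
        rw [Fintype.sum_prod_type]
    _ ≤ _ := h1

lemma en_blockX_mul_le (X : WeightSpace n H) (k : ℕ) (h : k + 1 ≤ H + 1)
    (u : Fin (n k) → ℝ) :
    en (fun j : Fin (n (k + 1)) => ∑ l, X ⟨⟨k, h⟩, (l, j)⟩ * u l) ≤ ‖X‖ * en u := by
  rw [en_eq_sqrt, en_eq_sqrt]
  have hstep : ∑ j : Fin (n (k + 1)), (∑ l, X ⟨⟨k, h⟩, (l, j)⟩ * u l) ^ 2 ≤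
      ‖X‖ ^ 2 * ∑ l, u l ^ 2 := by
    calc ∑ j : Fin (n (k + 1)), (∑ l, X ⟨⟨k, h⟩, (l, j)⟩ * u l) ^ 2
        ≤ ∑ j : Fin (n (k + 1)), (∑ l, X ⟨⟨k, h⟩, (l, j)⟩ ^ 2) * ∑ l, u l ^ 2 :=
          Finset.sum_le_sum fun j _ => Finset.sum_mul_sq_le_sq_mul_sq _ _ _
      _ = (∑ j : Fin (n (k + 1)), ∑ l, X ⟨⟨k, h⟩, (l, j)⟩ ^ 2) * ∑ l, u l ^ 2 := by
          rw [Finset.sum_mul]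
      _ ≤ ‖X‖ ^ 2 * ∑ l, u l ^ 2 := by
          refine mul_le_mul_of_nonneg_right ?_ (Finset.sum_nonneg fun _ _ => sq_nonneg _)
          rw [Finset.sum_comm]
          exact sum_block_sq_le n H X ⟨k, h⟩
  calc Real.sqrt (∑ j : Fin (n (k + 1)), (∑ l, X ⟨⟨k, h⟩, (l, j)⟩ * u l) ^ 2)
      ≤ Real.sqrt (‖X‖ ^ 2 * ∑ l, u l ^ 2) := Real.sqrt_le_sqrt hstep
    _ = ‖X‖ * Real.sqrt (∑ l, u l ^ 2) := by
        rw [Real.sqrt_mul (sq_nonneg _), Real.sqrt_sq (norm_nonneg _)]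

lemma en_blockW_mul_le (W : WeightSpace n H) (k : ℕ) (h : k + 1 ≤ H + 1)
    (u : Fin (n k) → ℝ) :
    en (fun j : Fin (n (k + 1)) => ∑ l, W ⟨⟨k, h⟩, (l, j)⟩ * u l) ≤
      starNorm n H W * en u := by
  have h1 := en_transpose_mul_le (block n H W ⟨k, h⟩) u
  have h2 : (fun j : Fin (n (k + 1)) => ∑ l, W ⟨⟨k, h⟩, (l, j)⟩ * u l) =
      (fun j => ∑ l, block n H W ⟨k, h⟩ l j * u l) := rfl
  rw [h2]
  exact le_trans h1 (mul_le_mul_of_nonneg_right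
    (opNorm2_block_le_starNorm n H W ⟨k, h⟩) (en_nonneg u))


/-! ### Derivatives along a line in weight space -/

variable (W X : WeightSpace n H)

/-- First derivative of the frozen activations along `t ↦ W + t X`. -/
noncomputable def dAct1 (ε : Pat n H) (W X : WeightSpace n H)
    (a : EuclideanSpace ℝ (Fin (n 0))) : (k : ℕ) → k ≤ H + 1 → ℝ → Fin (n k) → ℝ
  | 0, _ => fun _ _ => 0
  | k + 1, h => fun t j =>
      if ε ⟨k, h⟩ j then
        ∑ l : Fin (n k),
          (X ⟨⟨k, h⟩, (l, j)⟩ * frozAct n H ε (W + t • X) a k (Nat.le_of_succ_le h) l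
            + (W ⟨⟨k, h⟩, (l, j)⟩ + t * X ⟨⟨k, h⟩, (l, j)⟩)
              * dAct1 ε W X a k (Nat.le_of_succ_le h) t l)
      else 0

/-- Second derivative of the frozen activations along `t ↦ W + t X`. -/
noncomputable def dAct2 (ε : Pat n H) (W X : WeightSpace n H)
    (a : EuclideanSpace ℝ (Fin (n 0))) : (k : ℕ) → k ≤ H + 1 → ℝ → Fin (n k) → ℝ
  | 0, _ => fun _ _ => 0
  | k + 1, h => fun t j =>
      if ε ⟨k, h⟩ j then
        ∑ l : Fin (n k),
          (2 * X ⟨⟨k, h⟩, (l, j)⟩ * dAct1 n H ε W X a k (Nat.le_of_succ_le h) t l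
            + (W ⟨⟨k, h⟩, (l, j)⟩ + t * X ⟨⟨k, h⟩, (l, j)⟩)
              * dAct2 ε W X a k (Nat.le_of_succ_le h) t l)
      else 0

lemma hasDerivAt_frozAct (ε : Pat n H) (a : EuclideanSpace ℝ (Fin (n 0))) :
    ∀ (k : ℕ) (h : k ≤ H + 1) (t : ℝ) (j : Fin (n k)),
      HasDerivAt (fun s => frozAct n H ε (W + s • X) a k h j)
        (dAct1 n H ε W X a k h t j) t := by
  intro k
  induction k with
  | zero =>
    intro h t j
    have h1 : (fun s : ℝ => frozAct n H ε (W + s • X) a 0 h j) = fun _ => a j := rfl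
    have h0 : dAct1 n H ε W X a 0 h t j = 0 := rfl
    rw [h1, h0]
    exact hasDerivAt_const t (a j)
  | succ k ih =>
    intro h t j
    by_cases hb : ε ⟨k, h⟩ j
    · have hfun : (fun s : ℝ => frozAct n H ε (W + s • X) a (k + 1) h j) =
          fun s => ∑ l : Fin (n k), (W ⟨⟨k, h⟩, (l, j)⟩ + s * X ⟨⟨k, h⟩, (l, j)⟩)
            * frozAct n H ε (W + s • X) a k (Nat.le_of_succ_le h) l := by
        funext s
        simp only [frozAct, if_pos hb, PiLp.add_apply, PiLp.smul_apply, smul_eq_mul]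
      rw [hfun]
      simp only [dAct1, if_pos hb]
      refine HasDerivAt.fun_sum fun l _ => ?_
      have hc : HasDerivAt (fun s : ℝ => W ⟨⟨k, h⟩, (l, j)⟩ + s * X ⟨⟨k, h⟩, (l, j)⟩)
          (X ⟨⟨k, h⟩, (l, j)⟩) t := by
        simpa using (hasDerivAt_mul_const (X ⟨⟨k, h⟩, (l, j)⟩)).const_add (W ⟨⟨k, h⟩, (l, j)⟩)
      exact hc.mul (ih (Nat.le_of_succ_le h) t l)
    · have hfun : (fun s : ℝ => frozAct n H ε (W + s • X) a (k + 1) h j) = fun _ => 0 := by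
        funext s
        simp only [frozAct, if_neg hb]
      rw [hfun]
      simp only [dAct1, if_neg hb]
      exact hasDerivAt_const t 0

lemma hasDerivAt_dAct1 (ε : Pat n H) (a : EuclideanSpace ℝ (Fin (n 0))) :
    ∀ (k : ℕ) (h : k ≤ H + 1) (t : ℝ) (j : Fin (n k)),
      HasDerivAt (fun s => dAct1 n H ε W X a k h s j)
        (dAct2 n H ε W X a k h t j) t := by
  intro k
  induction k with
  | zero =>
    intro h t j
    exact hasDerivAt_const t 0
  | succ k ih =>
    intro h t j
    by_cases hb : ε ⟨k, h⟩ j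
    · simp only [dAct1, dAct2, if_pos hb]
      have hsum : HasDerivAt (fun s => ∑ l : Fin (n k),
          (X ⟨⟨k, h⟩, (l, j)⟩ * frozAct n H ε (W + s • X) a k (Nat.le_of_succ_le h) l
            + (W ⟨⟨k, h⟩, (l, j)⟩ + s * X ⟨⟨k, h⟩, (l, j)⟩)
              * dAct1 n H ε W X a k (Nat.le_of_succ_le h) s l))
          (∑ l : Fin (n k),
            (X ⟨⟨k, h⟩, (l, j)⟩ * dAct1 n H ε W X a k (Nat.le_of_succ_le h) t l
              + (X ⟨⟨k, h⟩, (l, j)⟩ * dAct1 n H ε W X a k (Nat.le_of_succ_le h) t l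
                + (W ⟨⟨k, h⟩, (l, j)⟩ + t * X ⟨⟨k, h⟩, (l, j)⟩)
                  * dAct2 n H ε W X a k (Nat.le_of_succ_le h) t l))) t := by
        refine HasDerivAt.fun_sum fun l _ => ?_
        have h1 : HasDerivAt (fun s : ℝ =>
            X ⟨⟨k, h⟩, (l, j)⟩ * frozAct n H ε (W + s • X) a k (Nat.le_of_succ_le h) l)
            (X ⟨⟨k, h⟩, (l, j)⟩ * dAct1 n H ε W X a k (Nat.le_of_succ_le h) t l) t :=
          (hasDerivAt_frozAct n H W X ε a k (Nat.le_of_succ_le h) t l).const_mul _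
        have hc : HasDerivAt (fun s : ℝ => W ⟨⟨k, h⟩, (l, j)⟩ + s * X ⟨⟨k, h⟩, (l, j)⟩)
            (X ⟨⟨k, h⟩, (l, j)⟩) t := by
          simpa using (hasDerivAt_mul_const (X ⟨⟨k, h⟩, (l, j)⟩)).const_add (W ⟨⟨k, h⟩, (l, j)⟩)
        exact h1.add (hc.mul (ih (Nat.le_of_succ_le h) t l))
      convert hsum using 1
      refine Finset.sum_congr rfl fun l _ => ?_
      ring
    · simp only [dAct1, dAct2, if_neg hb]
      exact hasDerivAt_const t 0


/-! ### Norm bounds for the activations and their derivatives at `t = 0` -/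

lemma pow_shift1 (s : ℝ) (k : ℕ) : (k : ℝ) * (s * s ^ (k - 1)) = (k : ℝ) * s ^ k := by
  cases k with
  | zero => simp
  | succ m => simp only [Nat.add_sub_cancel, pow_succ]; ring

lemma pow_shift2 (s : ℝ) (k : ℕ) :
    (k : ℝ) * ((k : ℝ) - 1) * (s * s ^ (k - 2)) = (k : ℝ) * ((k : ℝ) - 1) * s ^ (k - 1) := by
  match k with
  | 0 => simp
  | 1 => simp
  | (m + 2) =>
    have h2 : (m + 2 : ℕ) - 2 = m := by omega
    have h1 : (m + 2 : ℕ) - 1 = m + 1 := by omega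
    rw [h2, h1, pow_succ]; ring

lemma en_zero {q : ℕ} : en (fun _ : Fin q => (0 : ℝ)) = 0 := by
  rw [en_eq_sqrt]; simp

lemma en_frozAct_le (ε : Pat n H) (a : EuclideanSpace ℝ (Fin (n 0))) (r : ℝ)
    (ha : ‖a‖ ≤ r) :
    ∀ (k : ℕ) (h : k ≤ H + 1), en (frozAct n H ε W a k h) ≤ r * starNorm n H W ^ k := by
  intro k
  induction k with
  | zero =>
    intro h
    have he : en (frozAct n H ε W a 0 h) = ‖a‖ := rfl
    rw [he, pow_zero, mul_one]
    exact ha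
  | succ k ih =>
    intro h
    have hge : frozAct n H ε W a (k + 1) h = fun j =>
        if ε ⟨k, h⟩ j then
          (fun j' : Fin (n (k + 1)) => ∑ l, W ⟨⟨k, h⟩, (l, j')⟩
            * frozAct n H ε W a k (Nat.le_of_succ_le h) l) j
        else 0 := rfl
    rw [hge]
    refine le_trans (en_gate_le _ _) (le_trans (en_blockW_mul_le n H W k h _) ?_)
    have h1 := ih (Nat.le_of_succ_le h)
    have hs := starNorm_nonneg n H W
    calc starNorm n H W * en (frozAct n H ε W a k (Nat.le_of_succ_le h))
        ≤ starNorm n H W * (r * starNorm n H W ^ k) := by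
          exact mul_le_mul_of_nonneg_left h1 hs
      _ = r * starNorm n H W ^ (k + 1) := by rw [pow_succ]; ring

lemma en_dAct1_le (ε : Pat n H) (a : EuclideanSpace ℝ (Fin (n 0))) (r : ℝ)
    (hr : 0 ≤ r) (ha : ‖a‖ ≤ r) :
    ∀ (k : ℕ) (h : k ≤ H + 1),
      en (dAct1 n H ε W X a k h 0) ≤ (k : ℝ) * (r * ‖X‖) * starNorm n H W ^ (k - 1) := by
  have hW0 : W + (0 : ℝ) • X = W := by simp
  intro k
  induction k with
  | zero =>
    intro h
    have : en (dAct1 n H ε W X a 0 h 0) = 0 := en_zero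
    rw [this]; simp
  | succ k ih =>
    intro h
    set s := starNorm n H W with hsdef
    have hs := starNorm_nonneg n H W
    have hX := norm_nonneg X
    have hsplit : dAct1 n H ε W X a (k + 1) h 0 = fun j =>
        if ε ⟨k, h⟩ j then
          (fun j' : Fin (n (k + 1)) =>
            (∑ l, X ⟨⟨k, h⟩, (l, j')⟩ * frozAct n H ε W a k (Nat.le_of_succ_le h) l)
            + ∑ l, W ⟨⟨k, h⟩, (l, j')⟩ * dAct1 n H ε W X a k (Nat.le_of_succ_le h) 0 l) j
        else 0 := by
      funext j
      show (if ε ⟨k, h⟩ j then _ else (0:ℝ)) = _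
      by_cases hb : ε ⟨k, h⟩ j
      · simp only [if_pos hb, hW0, ← Finset.sum_add_distrib]
        exact Finset.sum_congr rfl fun l _ => by ring
      · simp only [if_neg hb]
    rw [hsplit]
    refine le_trans (en_gate_le _ _) (le_trans (en_add_le _ _) ?_)
    have h1 : en (fun j' : Fin (n (k + 1)) =>
        ∑ l, X ⟨⟨k, h⟩, (l, j')⟩ * frozAct n H ε W a k (Nat.le_of_succ_le h) l)
        ≤ ‖X‖ * (r * s ^ k) :=
      le_trans (en_blockX_mul_le n H X k h _) (mul_le_mul_of_nonneg_left
        (en_frozAct_le n H W ε a r ha k (Nat.le_of_succ_le h)) hX)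
    have h2 : en (fun j' : Fin (n (k + 1)) =>
        ∑ l, W ⟨⟨k, h⟩, (l, j')⟩ * dAct1 n H ε W X a k (Nat.le_of_succ_le h) 0 l)
        ≤ s * ((k : ℝ) * (r * ‖X‖) * s ^ (k - 1)) :=
      le_trans (en_blockW_mul_le n H W k h _) (mul_le_mul_of_nonneg_left
        (ih (Nat.le_of_succ_le h)) hs)
    have hp := pow_shift1 s k
    have hcast : ((k : ℝ) + 1) = ((k + 1 : ℕ) : ℝ) := by push_cast; ring
    calc en _ + en _ ≤ ‖X‖ * (r * s ^ k) + s * ((k : ℝ) * (r * ‖X‖) * s ^ (k - 1)) :=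
          add_le_add h1 h2
      _ = r * ‖X‖ * s ^ k + (r * ‖X‖) * ((k:ℝ) * (s * s ^ (k - 1))) := by ring
      _ = r * ‖X‖ * s ^ k + (r * ‖X‖) * ((k:ℝ) * s ^ k) := by rw [hp]
      _ = ((k : ℝ) + 1) * (r * ‖X‖) * s ^ k := by ring
      _ = ((k + 1 : ℕ) : ℝ) * (r * ‖X‖) * s ^ ((k + 1) - 1) := by
          rw [← hcast]; norm_num

lemma en_dAct2_le (ε : Pat n H) (a : EuclideanSpace ℝ (Fin (n 0))) (r : ℝ)
    (hr : 0 ≤ r) (ha : ‖a‖ ≤ r) :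
    ∀ (k : ℕ) (h : k ≤ H + 1),
      en (dAct2 n H ε W X a k h 0) ≤
        (k : ℝ) * ((k : ℝ) - 1) * (r * ‖X‖ ^ 2) * starNorm n H W ^ (k - 2) := by
  have hW0 : W + (0 : ℝ) • X = W := by simp
  intro k
  induction k with
  | zero =>
    intro h
    have : en (dAct2 n H ε W X a 0 h 0) = 0 := en_zero
    rw [this]; simp
  | succ k ih =>
    intro h
    set s := starNorm n H W with hsdef
    have hs := starNorm_nonneg n H W
    have hX := norm_nonneg X
    have hsplit : dAct2 n H ε W X a (k + 1) h 0 = fun j =>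
        if ε ⟨k, h⟩ j then
          (fun j' : Fin (n (k + 1)) =>
            (∑ l, X ⟨⟨k, h⟩, (l, j')⟩ * (2 * dAct1 n H ε W X a k (Nat.le_of_succ_le h) 0 l))
            + ∑ l, W ⟨⟨k, h⟩, (l, j')⟩ * dAct2 n H ε W X a k (Nat.le_of_succ_le h) 0 l) j
        else 0 := by
      funext j
      show (if ε ⟨k, h⟩ j then _ else (0:ℝ)) = _
      by_cases hb : ε ⟨k, h⟩ j
      · simp only [if_pos hb, hW0, ← Finset.sum_add_distrib]
        exact Finset.sum_congr rfl fun l _ => by ring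
      · simp only [if_neg hb]
    rw [hsplit]
    refine le_trans (en_gate_le _ _) (le_trans (en_add_le _ _) ?_)
    have hsm : en (fun l : Fin (n k) => 2 * dAct1 n H ε W X a k (Nat.le_of_succ_le h) 0 l)
        = 2 * en (dAct1 n H ε W X a k (Nat.le_of_succ_le h) 0) := by
      have := en_smul_le (q := n k) 2 (dAct1 n H ε W X a k (Nat.le_of_succ_le h) 0)
      simpa using this
    have h1 : en (fun j' : Fin (n (k + 1)) =>
        ∑ l, X ⟨⟨k, h⟩, (l, j')⟩ * (2 * dAct1 n H ε W X a k (Nat.le_of_succ_le h) 0 l))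
        ≤ ‖X‖ * (2 * ((k : ℝ) * (r * ‖X‖) * s ^ (k - 1))) := by
      refine le_trans (en_blockX_mul_le n H X k h _) ?_
      rw [hsm]
      exact mul_le_mul_of_nonneg_left
        (mul_le_mul_of_nonneg_left (en_dAct1_le n H W X ε a r hr ha k (Nat.le_of_succ_le h))
          (by norm_num)) hX
    have h2 : en (fun j' : Fin (n (k + 1)) =>
        ∑ l, W ⟨⟨k, h⟩, (l, j')⟩ * dAct2 n H ε W X a k (Nat.le_of_succ_le h) 0 l)
        ≤ s * ((k : ℝ) * ((k : ℝ) - 1) * (r * ‖X‖ ^ 2) * s ^ (k - 2)) :=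
      le_trans (en_blockW_mul_le n H W k h _) (mul_le_mul_of_nonneg_left
        (ih (Nat.le_of_succ_le h)) hs)
    have hp := pow_shift2 s k
    calc en _ + en _
        ≤ ‖X‖ * (2 * ((k : ℝ) * (r * ‖X‖) * s ^ (k - 1)))
          + s * ((k : ℝ) * ((k : ℝ) - 1) * (r * ‖X‖ ^ 2) * s ^ (k - 2)) := add_le_add h1 h2
      _ = 2 * (k : ℝ) * (r * ‖X‖ ^ 2) * s ^ (k - 1)
          + (r * ‖X‖ ^ 2) * ((k : ℝ) * ((k : ℝ) - 1) * (s * s ^ (k - 2))) := by ring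
      _ = 2 * (k : ℝ) * (r * ‖X‖ ^ 2) * s ^ (k - 1)
          + (r * ‖X‖ ^ 2) * ((k : ℝ) * ((k : ℝ) - 1) * s ^ (k - 1)) := by rw [hp]
      _ = ((k : ℝ) + 1) * (k : ℝ) * (r * ‖X‖ ^ 2) * s ^ (k - 1) := by ring
      _ = ((k + 1 : ℕ) : ℝ) * (((k + 1 : ℕ) : ℝ) - 1) * (r * ‖X‖ ^ 2) * s ^ ((k + 1) - 2) := by
          have : ((k + 1 : ℕ) : ℝ) = (k : ℝ) + 1 := by push_cast; ring
          rw [this]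
          have h12 : (k + 1) - 2 = k - 1 := by omega
          rw [h12]
          ring


/-! ### The Hessian bound -/

variable (N : ℕ) (hout : n (H + 1) = 1) (a : Fin N → EuclideanSpace ℝ (Fin (n 0)))
  (f : EuclideanSpace ℝ (Fin (n 0)) → ℝ) (lam : ℝ)

set_option maxHeartbeats 1000000 in
lemma hessian_bound (hH : 1 ≤ H) (r θ : ℝ) (hr : 0 < r) (hθlam : θ < lam)
    (hnorm : ∀ i, ‖a i‖ ≤ r) (ε : Fin N → Pat n H)
    (W : WeightSpace n H) (hW : W ∈ VsetN n H N hout a f lam θ r ε)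
    (X : WeightSpace n H) :
    θ * ‖X‖ ^ 2 ≤ deriv (deriv fun t : ℝ => phi n H N hout a f lam ε (W + t • X)) 0 := by
  classical
  have hW0 : W + (0 : ℝ) • X = W := by simp
  set s := starNorm n H W with hsdef
  have hs : 0 ≤ s := starNorm_nonneg n H W
  set Y : Fin N → ℝ → ℝ := fun i t =>
    frozAct n H (ε i) (W + t • X) (a i) (H + 1) le_rfl (out0 n H hout) with hYdef
  set Y1 : Fin N → ℝ → ℝ := fun i t =>
    dAct1 n H (ε i) W X (a i) (H + 1) le_rfl t (out0 n H hout) with hY1def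
  set Y2 : Fin N → ℝ → ℝ := fun i t =>
    dAct2 n H (ε i) W X (a i) (H + 1) le_rfl t (out0 n H hout) with hY2def
  set C : ℝ := inner ℝ W X with hCdef
  have hYd : ∀ i t, HasDerivAt (Y i) (Y1 i t) t := fun i t =>
    hasDerivAt_frozAct n H W X (ε i) (a i) (H + 1) le_rfl t _
  have hY1d : ∀ i t, HasDerivAt (Y1 i) (Y2 i t) t := fun i t =>
    hasDerivAt_dAct1 n H W X (ε i) (a i) (H + 1) le_rfl t _
  have hfun : (fun t : ℝ => phi n H N hout a f lam ε (W + t • X)) =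
      fun t => (1 / (2 * (N : ℝ))) * ∑ i, (f (a i) - Y i t) ^ 2
        + lam / 2 * (‖W‖ ^ 2 + 2 * C * t + ‖X‖ ^ 2 * t ^ 2) := by
    funext t
    simp only [phi, frozLoss, frozOut, hYdef]
    congr 1
    rw [norm_add_sq_real W (t • X), real_inner_smul_right, norm_smul, Real.norm_eq_abs,
      mul_pow, sq_abs, ← hCdef]
    ring
  set g1 : ℝ → ℝ := fun t =>
    (1 / (2 * (N : ℝ))) * ∑ i, 2 * (f (a i) - Y i t) * (-(Y1 i t))
      + lam / 2 * (2 * C + ‖X‖ ^ 2 * (2 * t)) with hg1def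
  have hgd : ∀ t, HasDerivAt (fun t => (1 / (2 * (N : ℝ))) * ∑ i, (f (a i) - Y i t) ^ 2
      + lam / 2 * (‖W‖ ^ 2 + 2 * C * t + ‖X‖ ^ 2 * t ^ 2)) (g1 t) t := by
    intro t
    have hterm : ∀ i : Fin N, HasDerivAt (fun t => (f (a i) - Y i t) ^ 2)
        (2 * (f (a i) - Y i t) * (-(Y1 i t))) t := by
      intro i
      have h := ((hYd i t).const_sub (f (a i))).fun_pow 2
      exact h.congr_deriv (by norm_num)
    have hS : HasDerivAt (fun t => ∑ i, (f (a i) - Y i t) ^ 2)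
        (∑ i, 2 * (f (a i) - Y i t) * (-(Y1 i t))) t :=
      HasDerivAt.fun_sum fun i _ => hterm i
    have hlin : HasDerivAt (fun t : ℝ => 2 * C * t) (2 * C) t := by
      simpa using (hasDerivAt_id t).const_mul (2 * C)
    have hqu : HasDerivAt (fun t : ℝ => ‖X‖ ^ 2 * t ^ 2) (‖X‖ ^ 2 * (2 * t)) t := by
      have h := (hasDerivAt_pow 2 t).const_mul (‖X‖ ^ 2)
      exact h.congr_deriv (by norm_num)
    have hquad : HasDerivAt (fun t : ℝ => ‖W‖ ^ 2 + 2 * C * t + ‖X‖ ^ 2 * t ^ 2)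
        (2 * C + ‖X‖ ^ 2 * (2 * t)) t := by
      simpa using ((hasDerivAt_const t (‖W‖ ^ 2)).fun_add hlin).fun_add hqu
    exact (hS.const_mul _).add (hquad.const_mul _)
  set G2 : ℝ := (1 / (2 * (N : ℝ))) *
      ∑ i, (2 * (-(Y1 i 0)) * (-(Y1 i 0)) + 2 * (f (a i) - Y i 0) * (-(Y2 i 0)))
      + lam / 2 * (‖X‖ ^ 2 * 2) with hG2def
  have hg1d : HasDerivAt g1 G2 0 := by
    have hterm : ∀ i : Fin N, HasDerivAt (fun t => 2 * (f (a i) - Y i t) * (-(Y1 i t)))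
        (2 * (-(Y1 i 0)) * (-(Y1 i 0)) + 2 * (f (a i) - Y i 0) * (-(Y2 i 0))) 0 := by
      intro i
      have hu : HasDerivAt (fun t => 2 * (f (a i) - Y i t)) (2 * (-(Y1 i 0))) 0 :=
        ((hYd i 0).const_sub (f (a i))).const_mul 2
      have hv : HasDerivAt (fun t => -(Y1 i t)) (-(Y2 i 0)) 0 := (hY1d i 0).neg
      exact hu.mul hv
    have hS : HasDerivAt (fun t => ∑ i, 2 * (f (a i) - Y i t) * (-(Y1 i t)))
        (∑ i, (2 * (-(Y1 i 0)) * (-(Y1 i 0)) + 2 * (f (a i) - Y i 0) * (-(Y2 i 0)))) 0 :=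
      HasDerivAt.fun_sum fun i _ => hterm i
    have hlin2 : HasDerivAt (fun t : ℝ => lam / 2 * (2 * C + ‖X‖ ^ 2 * (2 * t)))
        (lam / 2 * (‖X‖ ^ 2 * 2)) 0 := by
      have h2 : HasDerivAt (fun t : ℝ => ‖X‖ ^ 2 * (2 * t)) (‖X‖ ^ 2 * 2) 0 := by
        have heq : (fun t : ℝ => ‖X‖ ^ 2 * (2 * t)) = fun t : ℝ => ‖X‖ ^ 2 * 2 * t := by
          funext t; ring
        rw [heq]
        simpa using (hasDerivAt_id (0 : ℝ)).const_mul (‖X‖ ^ 2 * 2)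
      have h1 : HasDerivAt (fun t : ℝ => 2 * C + ‖X‖ ^ 2 * (2 * t)) (‖X‖ ^ 2 * 2) 0 := by
        simpa using (hasDerivAt_const (0 : ℝ) (2 * C)).fun_add h2
      exact h1.const_mul _
    exact (hS.const_mul _).add hlin2
  rw [hfun]
  have hderiv1 : (deriv fun t => (1 / (2 * (N : ℝ))) * ∑ i, (f (a i) - Y i t) ^ 2
      + lam / 2 * (‖W‖ ^ 2 + 2 * C * t + ‖X‖ ^ 2 * t ^ 2)) = g1 :=
    funext fun t => (hgd t).deriv
  rw [hderiv1, hg1d.deriv]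
  -- arithmetic estimate
  set e : Fin N → ℝ := fun i => f (a i) - Y i 0 with hedef
  set FL : ℝ := frozLoss n H N hout a f ε W with hFLdef
  have hFLnn : 0 ≤ FL := by
    rw [hFLdef]
    unfold frozLoss
    have h0 : 0 ≤ (1 : ℝ) / (2 * (N : ℝ)) := by positivity
    exact mul_nonneg h0 (Finset.sum_nonneg fun i _ => sq_nonneg _)
  have he0 : ∀ i, frozOut n H hout (ε i) W (a i) = Y i 0 := by
    intro i
    simp only [hYdef, hW0]
    rfl
  have hFLe : FL = (1 / (2 * (N : ℝ))) * ∑ i, e i ^ 2 := by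
    rw [hFLdef]
    unfold frozLoss
    congr 1
    exact Finset.sum_congr rfl fun i _ => by rw [he0 i]
  set K : ℝ := ((H : ℝ) + 1) * (H : ℝ) * (r * ‖X‖ ^ 2) * s ^ (H - 1) with hKdef
  have hKnn : 0 ≤ K := by
    rw [hKdef]
    have h1 : (0 : ℝ) ≤ (H : ℝ) := Nat.cast_nonneg H
    positivity
  have hY2b : ∀ i, |Y2 i 0| ≤ K := by
    intro i
    have h1 := abs_le_en (dAct2 n H (ε i) W X (a i) (H + 1) le_rfl 0) (out0 n H hout)
    have h2 := en_dAct2_le n H W X (ε i) (a i) r (le_of_lt hr) (hnorm i) (H + 1) le_rfl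
    have h3 : ((H + 1 : ℕ) : ℝ) * (((H + 1 : ℕ) : ℝ) - 1) * (r * ‖X‖ ^ 2)
        * starNorm n H W ^ ((H + 1) - 2) = K := by
      have hexp : (H + 1) - 2 = H - 1 := by omega
      rw [hexp, hKdef, ← hsdef]
      push_cast
      ring
    rw [h3] at h2
    exact le_trans h1 h2
  set A : ℝ := (1 / (2 * (N : ℝ))) * ∑ i, 2 * |e i| with hAdef
  have hA : A ≤ Real.sqrt 2 * Real.sqrt FL := by
    rcases Nat.eq_zero_or_pos N with hN | hN
    · have hA0 : A = 0 := by
        rw [hAdef]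
        subst hN
        simp
      rw [hA0]
      positivity
    · have hNpos : (0 : ℝ) < N := by exact_mod_cast hN
      set SQ : ℝ := ∑ i, e i ^ 2 with hSQdef
      have hSQnn : 0 ≤ SQ := Finset.sum_nonneg fun i _ => sq_nonneg _
      have h1 : (∑ i, |e i|) ^ 2 ≤ (N : ℝ) * SQ := by
        have h := Finset.sum_mul_sq_le_sq_mul_sq Finset.univ (fun _ : Fin N => (1 : ℝ))
          (fun i => |e i|)
        simpa [hSQdef, sq_abs, Finset.card_univ] using h
      have h2 : ∑ i, |e i| ≤ Real.sqrt ((N : ℝ) * SQ) :=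
        (Real.le_sqrt (Finset.sum_nonneg fun i _ => abs_nonneg _) (by positivity)).2 h1
      have hSQFL : SQ = 2 * (N : ℝ) * FL := by
        rw [hFLe]
        field_simp
      have h3 : Real.sqrt ((N : ℝ) * SQ) = (N : ℝ) * (Real.sqrt 2 * Real.sqrt FL) := by
        rw [hSQFL, show (N : ℝ) * (2 * (N : ℝ) * FL) = ((N : ℝ)) ^ 2 * (2 * FL) by ring,
          Real.sqrt_mul (sq_nonneg _), Real.sqrt_sq hNpos.le,
          Real.sqrt_mul (by norm_num : (0 : ℝ) ≤ 2)]
      have h4 : A = (1 / (N : ℝ)) * ∑ i, |e i| := by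
        rw [hAdef, show (∑ i, 2 * |e i|) = 2 * ∑ i, |e i| from (Finset.mul_sum _ _ _).symm]
        field_simp
      rw [h4]
      calc (1 / (N : ℝ)) * ∑ i, |e i| ≤ (1 / (N : ℝ)) * ((N : ℝ) * (Real.sqrt 2 * Real.sqrt FL)) := by
            refine mul_le_mul_of_nonneg_left ?_ (by positivity)
            rw [← h3]
            exact h2
        _ = Real.sqrt 2 * Real.sqrt FL := by field_simp
  -- per-term lower bound
  have hterm2 : ∀ i : Fin N, -(2 * |e i| * K) ≤
      2 * (-(Y1 i 0)) * (-(Y1 i 0)) + 2 * (f (a i) - Y i 0) * (-(Y2 i 0)) := by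
    intro i
    have hei : f (a i) - Y i 0 = e i := rfl
    rw [hei]
    have h1 : 0 ≤ 2 * (-(Y1 i 0)) * (-(Y1 i 0)) := by nlinarith [sq_nonneg (Y1 i 0)]
    have h4 : -(|e i| * |Y2 i 0|) ≤ e i * (-(Y2 i 0)) := by
      rw [mul_neg, ← abs_mul]
      exact neg_le_neg (le_abs_self _)
    have h5 : |e i| * |Y2 i 0| ≤ |e i| * K := mul_le_mul_of_nonneg_left (hY2b i) (abs_nonneg _)
    nlinarith
  have hc0 : 0 ≤ (1 : ℝ) / (2 * (N : ℝ)) := by positivity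
  have hsum1 : -((1 / (2 * (N : ℝ))) * ∑ i, 2 * |e i| * K) ≤ (1 / (2 * (N : ℝ))) *
      ∑ i, (2 * (-(Y1 i 0)) * (-(Y1 i 0)) + 2 * (f (a i) - Y i 0) * (-(Y2 i 0))) := by
    have h6 : ∑ i, -(2 * |e i| * K) ≤
        ∑ i, (2 * (-(Y1 i 0)) * (-(Y1 i 0)) + 2 * (f (a i) - Y i 0) * (-(Y2 i 0))) :=
      Finset.sum_le_sum fun i _ => hterm2 i
    have h7 : ∑ i : Fin N, -(2 * |e i| * K) = -∑ i, 2 * |e i| * K := by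
      rw [Finset.sum_neg_distrib]
    rw [h7] at h6
    calc -((1 / (2 * (N : ℝ))) * ∑ i, 2 * |e i| * K)
        = (1 / (2 * (N : ℝ))) * -(∑ i, 2 * |e i| * K) := by ring
      _ ≤ _ := mul_le_mul_of_nonneg_left h6 hc0
  have hEK : (1 / (2 * (N : ℝ))) * ∑ i, 2 * |e i| * K = A * K := by
    rw [hAdef, show (∑ i, 2 * |e i| * K) = (∑ i, 2 * |e i|) * K from
      (Finset.sum_mul _ _ _).symm]
    ring
  have hAK : A * K ≤ (Real.sqrt 2 * Real.sqrt FL) * K := by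
    refine mul_le_mul_of_nonneg_right hA hKnn
  -- use membership in V
  have hU : Real.sqrt FL * s ^ (H - 1) <
      (lam - θ) / (Real.sqrt 2 * ((H : ℝ) * ((H : ℝ) + 1)) * r) := by
    have := hW
    simp only [VsetN, Set.mem_setOf_eq] at this
    exact this
  have hd : (0 : ℝ) < Real.sqrt 2 * ((H : ℝ) * ((H : ℝ) + 1)) * r := by
    have hHpos : (0 : ℝ) < (H : ℝ) := by exact_mod_cast hH
    have h2 : (0 : ℝ) < Real.sqrt 2 := by positivity
    positivity
  have h6 : Real.sqrt FL * s ^ (H - 1) * (Real.sqrt 2 * ((H : ℝ) * ((H : ℝ) + 1)) * r)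
      < lam - θ := (lt_div_iff₀ hd).1 hU
  have h7 : (Real.sqrt 2 * Real.sqrt FL) * K =
      (Real.sqrt FL * s ^ (H - 1) * (Real.sqrt 2 * ((H : ℝ) * ((H : ℝ) + 1)) * r)) * ‖X‖ ^ 2 := by
    rw [hKdef]
    ring
  have h8 : (Real.sqrt 2 * Real.sqrt FL) * K ≤ (lam - θ) * ‖X‖ ^ 2 := by
    rw [h7]
    exact mul_le_mul_of_nonneg_right h6.le (by positivity)
  have hfinal : -((lam - θ) * ‖X‖ ^ 2) ≤ (1 / (2 * (N : ℝ))) *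
      ∑ i, (2 * (-(Y1 i 0)) * (-(Y1 i 0)) + 2 * (f (a i) - Y i 0) * (-(Y2 i 0))) := by
    refine le_trans ?_ hsum1
    rw [hEK]
    exact neg_le_neg (le_trans hAK h8)
  rw [hG2def]
  nlinarith [hfinal]

end PSC

/-- piecewise strong convexity: there are finitely many closed sets
`B₁,…,B_L` with `U(λ,θ) = ⋃ᵢ (Bᵢ ∩ U(λ,θ))`, open sets `Vᵢ ⊇ Bᵢ ∩ U(λ,θ)` and smooth
functions `ϕᵢ` on `Vᵢ` whose Hessian is `⪰ θ·I` on `Vᵢ` (every second directional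
derivative is `≥ θ‖X‖²`), and `ℓ_λ = ϕᵢ` on `Bᵢ ∩ U(λ,θ)`. -/
theorem piecewise_strong_convexity (n : ℕ → ℕ) (H : ℕ) (hH : 1 ≤ H)
    (hout : n (H + 1) = 1) (hwidth : ∀ i, 1 ≤ i → i ≤ H → 1 < n i)
    (N : ℕ) (a : Fin N → EuclideanSpace ℝ (Fin (n 0)))
    (f : EuclideanSpace ℝ (Fin (n 0)) → ℝ)
    (r lam θ : ℝ) (hr : 0 < r) (hθ : 0 < θ) (hθlam : θ < lam)
    (hnorm : ∀ i, ‖a i‖ ≤ r) :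
    ∃ (L : ℕ) (B V : Fin L → Set (WeightSpace n H)) (φ : Fin L → WeightSpace n H → ℝ),
      0 < L ∧
      (∀ i, IsClosed (B i)) ∧
      Uset n H N hout a f lam θ r = ⋃ i, B i ∩ Uset n H N hout a f lam θ r ∧
      (∀ i, IsOpen (V i) ∧ B i ∩ Uset n H N hout a f lam θ r ⊆ V i) ∧
      (∀ i, ContDiffOn ℝ (⊤ : ℕ∞) (φ i) (V i)) ∧
      (∀ i, ∀ W ∈ V i, ∀ X : WeightSpace n H,
        θ * ‖X‖ ^ 2 ≤ deriv (deriv fun t : ℝ => φ i (W + t • X)) 0) ∧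
      (∀ i, Set.EqOn (lossReg n H N hout a f lam) (φ i)
        (B i ∩ Uset n H N hout a f lam θ r)) := by
  classical
  set PT := Fin N → PSC.Pat n H with hPT
  let eqv : PT ≃ Fin (Fintype.card PT) := Fintype.equivFin PT
  refine ⟨Fintype.card PT,
    fun i => PSC.BsetN n H N a (eqv.symm i),
    fun i => PSC.VsetN n H N hout a f lam θ r (eqv.symm i),
    fun i => PSC.phi n H N hout a f lam (eqv.symm i),
    Fintype.card_pos, fun i => PSC.isClosed_BsetN n H N a _, ?_, ?_, ?_, ?_, ?_⟩
  · ext W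
    simp only [Set.mem_iUnion]
    constructor
    · intro hWU
      refine ⟨eqv (fun i => (PSC.exists_pat_mem n H W (a i)).choose), ?_, hWU⟩
      rw [Equiv.symm_apply_apply]
      exact Set.mem_iInter.2 fun i => (PSC.exists_pat_mem n H W (a i)).choose_spec
    · rintro ⟨i, hWmem⟩
      exact hWmem.2
  · intro i
    exact ⟨PSC.isOpen_VsetN n H N hout a f lam θ r _,
      PSC.BU_subset_VsetN n H N hout a f lam θ r _⟩
  · intro i
    exact (PSC.contDiff_phi n H N hout a f lam _).contDiffOn
  · intro i W hWmem X
    exact PSC.hessian_bound n H N hout a f lam hH r θ hr hθlam hnorm _ W hWmem X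
  · intro i W hWmem
    show lossReg n H N hout a f lam W = PSC.phi n H N hout a f lam (eqv.symm i) W
    unfold lossReg PSC.phi
    rw [PSC.frozLoss_eq_loss n H N hout a f _ W hWmem.1]
end
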